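/- arXiv:math/0309439 — 10 statements merged into one kernel-verified Lean document; each statement's English description precedes it below -/
import Mathlib

section
/- Let (F,W) be a mixed Hodge structure on V. Then the Deligne bigrading is given by the explicit formula I^{p,q} = F^p ∩ W_{p+q} ∩ ( conj(F^q) ∩ W_{p+q} + Σ_{j>0} conj(F^{q−j}) ∩ W_{p+q−1−j} ) for all p, q. -/
open Complex

noncomputable section

/-- A conjugation (real structure) on a complex vector space: an additive,
conjugate-semilinear involution of `V`. -/
structure Conjugation (V : Type*) [AddCommGroup V] [Module ℂ V] where
  toFun : V →ₛₗ[starRingEnd ℂ] V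
  invol : ∀ v, toFun (toFun v) = v

namespace Conjugation

variable {V : Type*} [AddCommGroup V] [Module ℂ V]

/-- The image of a complex subspace under the conjugation; it is again a
complex subspace. -/
def submap (c : Conjugation V) (S : Submodule ℂ V) : Submodule ℂ V where
  carrier := c.toFun '' (S : Set V)
  add_mem' := by
    rintro _ _ ⟨x, hx, rfl⟩ ⟨y, hy, rfl⟩
    exact ⟨x + y, S.add_mem hx hy, map_add _ _ _⟩
  zero_mem' := ⟨0, S.zero_mem, map_zero _⟩
  smul_mem' := by
    rintro a _ ⟨x, hx, rfl⟩
    refine ⟨(starRingEnd ℂ) a • x, S.smul_mem _ hx, ?_⟩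
    rw [map_smulₛₗ, starRingEnd_self_apply]

end Conjugation

/-- `(F, W)` is a mixed Hodge structure on `V` relative to the conjugation `c`:
`F` is a finite decreasing filtration by complex subspaces, `W` is a finite
increasing filtration by real (conjugation-stable) subspaces, and `F` induces
on each graded piece `Gr^W_k = W_k / W_{k-1}` a pure Hodge structure of
weight `k`. -/
structure IsMHS {V : Type*} [AddCommGroup V] [Module ℂ V] (c : Conjugation V)
    (F W : ℤ → Submodule ℂ V) : Prop where
  antitone_F : Antitone F
  exists_F_top : ∃ p, F p = ⊤
  exists_F_bot : ∃ p, F p = ⊥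
  monotone_W : Monotone W
  exists_W_bot : ∃ k, W k = ⊥
  exists_W_top : ∃ k, W k = ⊤
  real_W : ∀ k, ∀ v ∈ W k, c.toFun v ∈ W k
  graded_sup : ∀ k p : ℤ,
    ((F p ⊓ W k).map (W (k-1)).mkQ) ⊔ ((c.submap (F (k - p + 1)) ⊓ W k).map (W (k-1)).mkQ)
      = (W k).map (W (k-1)).mkQ
  graded_inf : ∀ k p : ℤ,
    ((F p ⊓ W k).map (W (k-1)).mkQ) ⊓ ((c.submap (F (k - p + 1)) ⊓ W k).map (W (k-1)).mkQ)
      = ⊥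

/-- `I` is a Deligne bigrading for the pair of filtrations `(F, W)`:
`V = ⊕_{p,q} I^{p,q}`, `F^p = ⊕_{a ≥ p} I^{a,b}`, `W_k = ⊕_{a+b ≤ k} I^{a,b}`,
and `conj (I^{p,q}) ⊆ I^{q,p} + ⊕_{r<q,s<p} I^{r,s}`. -/
structure IsDeligneBigrading {V : Type*} [AddCommGroup V] [Module ℂ V] (c : Conjugation V)
    (F W : ℤ → Submodule ℂ V) (I : ℤ → ℤ → Submodule ℂ V) : Prop where
  internal : DirectSum.IsInternal (fun pq : ℤ × ℤ => I pq.1 pq.2)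
  hF : ∀ p : ℤ, F p = ⨆ pq : ℤ × ℤ, ⨆ _ : p ≤ pq.1, I pq.1 pq.2
  hW : ∀ k : ℤ, W k = ⨆ pq : ℤ × ℤ, ⨆ _ : pq.1 + pq.2 ≤ k, I pq.1 pq.2
  conj_cond : ∀ p q : ℤ, ∀ v ∈ I p q,
    c.toFun v ∈ I q p ⊔ ⨆ pq : ℤ × ℤ, ⨆ _ : pq.1 < q ∧ pq.2 < p, I pq.1 pq.2

/-!
Every space in the formula is a sum of components `I^{a,b}`: by independence of the components,
`F^m ∩ W_k` is the sum over `a ≥ m, a + b ≤ k`. Conjugation sends `I^{a,b}` into components of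
first index `≤ b`, and of first index `b` only into `I^{b,a}`. Hence `conj(F^m) ∩ W_k` lies in
the components of first index `< k - m` plus `I^{k-m,m}`; for both kinds of terms of the bracket
this gives first index `< p` or the component `I^{p,q}`, and intersecting with `F^p` leaves
`I^{p,q}`. Conversely, applying the conjugation to
`conj(I^{p,q}) ⊆ I^{q,p} + Σ_{r<q, s<p} I^{r,s}` puts `I^{p,q}` into the bracket, the component
`I^{r,s}` contributing to the term `j = q - r`.
-/

theorem iSupIndep.iSup_inf_iSup {α ι : Type*} [CompleteLattice α] [IsModularLattice α]
    [IsCompactlyGenerated α] {f : ι → α} (hf : iSupIndep f) (P Q : ι → Prop) :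
    (⨆ i, ⨆ _ : P i, f i) ⊓ (⨆ i, ⨆ _ : Q i, f i) = ⨆ i, ⨆ _ : P i ∧ Q i, f i := by
  have hsplit : (⨆ i, ⨆ _ : P i, f i) =
      (⨆ i, ⨆ _ : P i ∧ Q i, f i) ⊔ ⨆ i, ⨆ _ : P i ∧ ¬Q i, f i := by
    rw [← iSup_sup_eq]
    refine iSup_congr fun i => ?_
    by_cases hQ : Q i <;> simp [hQ]
  have hdisj : Disjoint (⨆ i, ⨆ _ : P i ∧ ¬Q i, f i) (⨆ i, ⨆ _ : Q i, f i) :=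
    hf.disjoint_biSup_biSup (s := {i | P i ∧ ¬Q i}) (t := {i | Q i})
      (Set.disjoint_left.2 fun _ h => h.2)
  rw [hsplit, sup_inf_assoc_of_le _ (biSup_mono fun _ h => h.2), hdisj.eq_bot, sup_bot_eq]

namespace Conjugation

variable {V : Type*} [AddCommGroup V] [Module ℂ V] (c : Conjugation V)

theorem submap_submap (S : Submodule ℂ V) : c.submap (c.submap S) = S := by
  ext x
  constructor
  · rintro ⟨_, ⟨y, hy, rfl⟩, rfl⟩
    rwa [c.invol]
  · intro hx
    exact ⟨c.toFun x, ⟨x, hx, rfl⟩, c.invol x⟩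

theorem submap_mono : Monotone c.submap :=
  fun _ _ h => Set.image_mono (f := c.toFun) h

def submapOrderIso : Submodule ℂ V ≃o Submodule ℂ V where
  toFun := c.submap
  invFun := c.submap
  left_inv := c.submap_submap
  right_inv := c.submap_submap
  map_rel_iff' {S T} :=
    ⟨fun h => by
      rw [← c.submap_submap S, ← c.submap_submap T]
      exact c.submap_mono h, fun h => c.submap_mono h⟩

theorem submap_sup (S T : Submodule ℂ V) : c.submap (S ⊔ T) = c.submap S ⊔ c.submap T :=
  c.submapOrderIso.map_sup S T

theorem submap_inf (S T : Submodule ℂ V) : c.submap (S ⊓ T) = c.submap S ⊓ c.submap T :=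
  c.submapOrderIso.map_inf S T

theorem submap_iSup {ι : Sort*} (S : ι → Submodule ℂ V) :
    c.submap (⨆ i, S i) = ⨆ i, c.submap (S i) :=
  c.submapOrderIso.map_iSup S

theorem submap_eq_self_of_real {T : Submodule ℂ V} (hT : ∀ v ∈ T, c.toFun v ∈ T) :
    c.submap T = T := by
  refine le_antisymm ?_ fun x hx => ⟨c.toFun x, hT x hx, c.invol x⟩
  rintro _ ⟨y, hy, rfl⟩
  exact hT y hy

end Conjugation

namespace IsDeligneBigrading

variable {V : Type*} [AddCommGroup V] [Module ℂ V] {c : Conjugation V}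
  {F W : ℤ → Submodule ℂ V} {I : ℤ → ℤ → Submodule ℂ V}

theorem le_F (hI : IsDeligneBigrading c F W I) (a b : ℤ) : I a b ≤ F a := by
  rw [hI.hF a]
  exact le_iSup₂_of_le (a, b) le_rfl le_rfl

theorem le_W (hI : IsDeligneBigrading c F W I) {a b k : ℤ} (h : a + b ≤ k) : I a b ≤ W k := by
  rw [hI.hW k]
  exact le_iSup₂_of_le (a, b) h le_rfl

theorem F_inf_W (hI : IsDeligneBigrading c F W I) (m k : ℤ) :
    F m ⊓ W k = ⨆ pq : ℤ × ℤ, ⨆ _ : m ≤ pq.1 ∧ pq.1 + pq.2 ≤ k, I pq.1 pq.2 := by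
  rw [hI.hF m, hI.hW k]
  exact hI.internal.submodule_iSupIndep.iSup_inf_iSup _ _

theorem submap_le (hI : IsDeligneBigrading c F W I) (a b : ℤ) :
    c.submap (I a b) ≤
      I b a ⊔ ⨆ pq : ℤ × ℤ, ⨆ _ : pq.1 < b ∧ pq.2 < a, I pq.1 pq.2 := by
  rintro _ ⟨v, hv, rfl⟩
  exact hI.conj_cond a b v hv

theorem submap_F_inf_W_le (hI : IsDeligneBigrading c F W I) (m k : ℤ) :
    c.submap (F m ⊓ W k) ≤
      ⨆ pq : ℤ × ℤ, ⨆ _ : pq.1 < k - m ∨ pq = (k - m, m), I pq.1 pq.2 := by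
  rw [hI.F_inf_W, c.submap_iSup]
  refine iSup_le fun ⟨a, b⟩ => ?_
  rw [c.submap_iSup]
  refine iSup_le fun ⟨hma, hk⟩ => (hI.submap_le a b).trans (sup_le ?_ ?_)
  · by_cases hb : b < k - m
    · exact le_iSup₂_of_le (b, a) (Or.inl hb) le_rfl
    · obtain rfl : a = m := by omega
      obtain rfl : b = k - a := by omega
      exact le_iSup₂_of_le (k - a, a) (Or.inr rfl) le_rfl
  · exact biSup_mono fun _ h => Or.inl (by omega)

theorem le_sup_iSup_submap (hI : IsDeligneBigrading c F W I) (p q : ℤ) :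
    I p q ≤ c.submap (F q ⊓ W (p + q)) ⊔
      ⨆ j : ℤ, ⨆ _ : 0 < j, c.submap (F (q - j) ⊓ W (p + q - 1 - j)) := by
  calc I p q = c.submap (c.submap (I p q)) := (c.submap_submap _).symm
    _ ≤ c.submap ((F q ⊓ W (p + q)) ⊔
          ⨆ j : ℤ, ⨆ _ : 0 < j, F (q - j) ⊓ W (p + q - 1 - j)) := by
      refine c.submap_mono ((hI.submap_le p q).trans (sup_le_sup ?_ ?_))
      · exact le_inf (hI.le_F q p) (hI.le_W (by omega))
      · refine iSup₂_le fun ⟨r, s⟩ ⟨hr, hs⟩ =>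
          le_iSup₂_of_le (q - r) (by omega) (le_inf ?_ ?_)
        · rw [sub_sub_cancel]
          exact hI.le_F r s
        · exact hI.le_W (by omega)
    _ = _ := by simp only [c.submap_sup, c.submap_iSup]

theorem F_inf_sup_iSup_submap_le (hI : IsDeligneBigrading c F W I) (p q : ℤ) :
    F p ⊓ (c.submap (F q ⊓ W (p + q)) ⊔
      ⨆ j : ℤ, ⨆ _ : 0 < j, c.submap (F (q - j) ⊓ W (p + q - 1 - j))) ≤ I p q := by
  set T := ⨆ pq : ℤ × ℤ, ⨆ _ : pq.1 < p ∨ pq = (p, q), I pq.1 pq.2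
  have hle_T : c.submap (F q ⊓ W (p + q)) ⊔
      ⨆ j : ℤ, ⨆ _ : 0 < j, c.submap (F (q - j) ⊓ W (p + q - 1 - j)) ≤ T := by
    refine sup_le ((hI.submap_F_inf_W_le q (p + q)).trans (biSup_mono fun pq h => ?_))
      (iSup₂_le fun j _ => (hI.submap_F_inf_W_le _ _).trans (biSup_mono fun pq h => ?_))
    · rcases h with h | rfl
      · exact Or.inl (by omega)
      · exact Or.inr (by simp)
    · rcases h with h | rfl
      · exact Or.inl (by omega)
      · exact Or.inl (by dsimp only; omega)
  calc F p ⊓ _ ≤ F p ⊓ T := inf_le_inf_left _ hle_T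
    _ = ⨆ pq : ℤ × ℤ, ⨆ _ : p ≤ pq.1 ∧ (pq.1 < p ∨ pq = (p, q)), I pq.1 pq.2 := by
      rw [hI.hF p]
      exact hI.internal.submodule_iSupIndep.iSup_inf_iSup _ _
    _ ≤ I p q := iSup₂_le fun pq ⟨hp, hpq⟩ => by
      rcases hpq with hlt | rfl
      · omega
      · exact le_rfl

end IsDeligneBigrading

theorem deligne_bigrading_formula_general
    {V : Type*} [AddCommGroup V] [Module ℂ V]
    (c : Conjugation V) (F W : ℤ → Submodule ℂ V) (h : IsMHS c F W)
    (I : ℤ → ℤ → Submodule ℂ V) (hI : IsDeligneBigrading c F W I) :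
    ∀ p q : ℤ, I p q = F p ⊓ W (p + q) ⊓
      ((c.submap (F q) ⊓ W (p + q)) ⊔
        ⨆ j : ℤ, ⨆ _ : 0 < j, (c.submap (F (q - j)) ⊓ W (p + q - 1 - j))) := by
  intro p q
  have hconj (m k : ℤ) : c.submap (F m) ⊓ W k = c.submap (F m ⊓ W k) := by
    rw [c.submap_inf, c.submap_eq_self_of_real (h.real_W k)]
  simp only [hconj]
  exact le_antisymm
    (le_inf (le_inf (hI.le_F p q) (hI.le_W le_rfl)) (hI.le_sup_iSup_submap p q))
    ((inf_le_inf_right _ inf_le_left).trans (hI.F_inf_sup_iSup_submap_le p q))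

/-- **Explicit formula for the Deligne bigrading**:
`I^{p,q} = F^p ∩ W_{p+q} ∩ ( conj(F^q) ∩ W_{p+q} + Σ_{j>0} conj(F^{q-j}) ∩ W_{p+q-1-j} )`. -/
theorem deligne_bigrading_formula
    {V : Type*} [AddCommGroup V] [Module ℂ V] [FiniteDimensional ℂ V]
    (c : Conjugation V) (F W : ℤ → Submodule ℂ V) (h : IsMHS c F W)
    (I : ℤ → ℤ → Submodule ℂ V) (hI : IsDeligneBigrading c F W I) :
    ∀ p q : ℤ, I p q = F p ⊓ W (p + q) ⊓
      ((c.submap (F q) ⊓ W (p + q)) ⊔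
        ⨆ j : ℤ, ⨆ _ : 0 < j, (c.submap (F (q - j)) ⊓ W (p + q - 1 - j))) :=
  deligne_bigrading_formula_general c F W h I hI
end
end

section
/- Let (F,W) be a mixed Hodge structure on V and let Y = Y_{(F,W)} be its Deligne grading, the semisimple endomorphism of V acting as multiplication by p+q on each I^{p,q}. Then Y − Ȳ ∈ Λ_{(F,W)}, where Ȳ = conj ∘ Y ∘ conj is the conjugate endomorphism. -/
/-!
For `v ∈ I^{p,q}` write `v̄ = w + u` with `w ∈ I^{q,p}` and `u ∈ ⊕_{r<q,s<p} I^{r,s}`.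
Since `Y` acts on `w` by the real scalar `p + q` and preserves `⊕_{r<q,s<p} I^{r,s}`,
`(Y - Ȳ) v` is the conjugate of `(p + q) u - Y u`, which lies in `⊕_{r<p,s<q} I^{r,s}`.
So `Y - Ȳ` strictly lowers both indices. Writing it as `∑ πᵢ (Y - Ȳ) πⱼ`, with `πᵢ` the
projections onto the finitely many nonzero pieces, every nonzero term is homogeneous of a
bidegree `i - j` with both coordinates negative.
-/

open Complex

noncomputable section

/-- The bidegree-`(r,s)` part `gl^{r,s}` of `End(V)` induced by a bigrading `I` of `V`. -/
def glrs {V : Type*} [AddCommGroup V] [Module ℂ V]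
    (I : ℤ → ℤ → Submodule ℂ V) (r s : ℤ) : Submodule ℂ (Module.End ℂ V) where
  carrier := {α | ∀ p q : ℤ, ∀ v ∈ I p q, α v ∈ I (p + r) (q + s)}
  add_mem' := by
    intro α β hα hβ p q v hv
    simpa [LinearMap.add_apply] using
      Submodule.add_mem _ (hα p q v hv) (hβ p q v hv)
  zero_mem' := by
    intro p q v hv
    simp
  smul_mem' := by
    intro t α hα p q v hv
    simpa [LinearMap.smul_apply] using Submodule.smul_mem _ t (hα p q v hv)

/-- `Λ_{(F,W)} = ⊕_{r<0, s<0} gl^{r,s}`, computed from the bigrading `I` of `(F,W)`. -/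
def Lambda {V : Type*} [AddCommGroup V] [Module ℂ V]
    (I : ℤ → ℤ → Submodule ℂ V) : Submodule ℂ (Module.End ℂ V) :=
  ⨆ rs : ℤ × ℤ, ⨆ _ : rs.1 < 0 ∧ rs.2 < 0, glrs I rs.1 rs.2

/-- The conjugate endomorphism `Ȳ = conj ∘ Y ∘ conj` of a complex-linear endomorphism. -/
def conjEnd {V : Type*} [AddCommGroup V] [Module ℂ V] (c : Conjugation V)
    (Y : Module.End ℂ V) : Module.End ℂ V where
  toFun v := c.toFun (Y (c.toFun v))
  map_add' u v := by simp
  map_smul' a v := by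
    simp only [map_smulₛₗ, map_smul, starRingEnd_self_apply, RingHom.id_apply]

open DirectSum

namespace DirectSum

section Decomposition

variable {ι R M : Type*} [DecidableEq ι] [Semiring R] [AddCommMonoid M] [Module R M]
  (ℳ : ι → Submodule R M) [Decomposition ℳ]

def decomposeProj (i : ι) : Module.End R M :=
  (ℳ i).subtype ∘ₗ component R ι (fun i => ℳ i) i ∘ₗ decomposeLinearEquiv ℳ

theorem decomposeProj_apply (i : ι) (m : M) : decomposeProj ℳ i m = decompose ℳ m i := rfl

theorem decomposeProj_mem (i : ι) (m : M) : decomposeProj ℳ i m ∈ ℳ i :=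
  (decompose ℳ m i).2

variable {ℳ}

theorem decomposeProj_of_mem_ne {i j : ι} {m : M} (hm : m ∈ ℳ j) (hij : j ≠ i) :
    decomposeProj ℳ i m = 0 :=
  decompose_of_mem_ne ℳ hm hij

theorem decomposeProj_eq_zero_of_mem_iSup {P : ι → Prop} {i : ι} (hi : ¬ P i) {m : M}
    (hm : m ∈ ⨆ j, ⨆ (_ : P j), ℳ j) : decomposeProj ℳ i m = 0 := by
  refine (iSup₂_le fun j hj x hx => ?_ : (⨆ j, ⨆ (_ : P j), ℳ j) ≤ LinearMap.ker _) hm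
  exact decomposeProj_of_mem_ne hx (ne_of_apply_ne P fun h => hi (h ▸ hj))

theorem sum_decomposeProj {s : Finset ι} (hs : ∀ i, ℳ i ≠ ⊥ → i ∈ s) :
    ∑ i ∈ s, decomposeProj ℳ i = 1 := by
  classical
  ext m
  rw [LinearMap.sum_apply, Module.End.one_apply]
  conv_rhs => rw [← sum_support_decompose ℳ m]
  refine (Finset.sum_subset (fun i hi => hs i fun hbot => ?_) fun i _ hi => ?_).symm
  · exact DFinsupp.mem_support_iff.mp hi (Subtype.ext (by simpa [hbot] using (decompose ℳ m i).2))
  · rw [decomposeProj_apply, DFinsupp.notMem_support_iff.mp hi, ZeroMemClass.coe_zero]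

end Decomposition

variable {ι R M : Type*} [AddCommGroup ι] [CommSemiring R] [AddCommMonoid M] [Module R M]

def homogeneousEnd (ℳ : ι → Submodule R M) (d : ι) : Submodule R (Module.End R M) where
  carrier := {f | ∀ i, ∀ m ∈ ℳ i, f m ∈ ℳ (i + d)}
  add_mem' hf hg i m hm := add_mem (hf i m hm) (hg i m hm)
  zero_mem' _ _ _ := zero_mem _
  smul_mem' r _ hf i m hm := Submodule.smul_mem _ r (hf i m hm)

variable [DecidableEq ι] {ℳ : ι → Submodule R M}

theorem decomposeProj_mul_mul_mem_homogeneousEnd [Decomposition ℳ] (f : Module.End R M)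
    (i j : ι) : decomposeProj ℳ i * f * decomposeProj ℳ j ∈ homogeneousEnd ℳ (i - j) := by
  intro k m hm
  rcases eq_or_ne k j with rfl | hkj
  · rw [add_sub_cancel]
    exact decomposeProj_mem ℳ i _
  · simp only [Module.End.mul_apply, decomposeProj_of_mem_ne hm hkj, map_zero, zero_mem]

theorem mem_iSup_homogeneousEnd_of_mem_iSup (hℳ : IsInternal ℳ) (hfin : {i | ℳ i ≠ ⊥}.Finite)
    (D : Set ι) {f : Module.End R M} (hf : ∀ j, ∀ m ∈ ℳ j, f m ∈ ⨆ i, ⨆ (_ : i - j ∈ D), ℳ i) :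
    f ∈ ⨆ d ∈ D, homogeneousEnd ℳ d := by
  let := hℳ.chooseDecomposition
  set S := hfin.toFinset
  have hf_eq : f = ∑ i ∈ S, ∑ j ∈ S, decomposeProj ℳ i * f * decomposeProj ℳ j := calc
    f = (∑ i ∈ S, decomposeProj ℳ i) * f * ∑ j ∈ S, decomposeProj ℳ j := by
      rw [sum_decomposeProj fun i hi => hfin.mem_toFinset.mpr hi, one_mul, mul_one]
    _ = _ := by rw [Finset.sum_mul, Finset.sum_mul]; simp_rw [Finset.mul_sum]
  rw [hf_eq]
  refine Submodule.sum_mem _ fun i _ => Submodule.sum_mem _ fun j _ => ?_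
  by_cases hij : i - j ∈ D
  · exact Submodule.mem_iSup_of_mem (i - j) (Submodule.mem_iSup_of_mem hij
      (decomposeProj_mul_mul_mem_homogeneousEnd f i j))
  · have hzero : decomposeProj ℳ i * f * decomposeProj ℳ j = 0 := LinearMap.ext fun m =>
      decomposeProj_eq_zero_of_mem_iSup (P := (· - j ∈ D)) hij (hf j _ (decomposeProj_mem ℳ j m))
    rw [hzero]
    exact zero_mem _

end DirectSum

section DeligneBigrading

variable {V : Type*} [AddCommGroup V] [Module ℂ V] {I : ℤ → ℤ → Submodule ℂ V}

def lowerSum (I : ℤ → ℤ → Submodule ℂ V) (p q : ℤ) : Submodule ℂ V :=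
  ⨆ rs : ℤ × ℤ, ⨆ _ : rs.1 < p ∧ rs.2 < q, I rs.1 rs.2

theorem le_lowerSum {p q r s : ℤ} (hr : r < p) (hs : s < q) : I r s ≤ lowerSum I p q :=
  le_iSup₂_of_le (r, s) ⟨hr, hs⟩ le_rfl

theorem lowerSum_mono {p q p' q' : ℤ} (hp : p ≤ p') (hq : q ≤ q') :
    lowerSum I p q ≤ lowerSum I p' q' :=
  iSup₂_le fun _ hrs => le_lowerSum (hrs.1.trans_le hp) (hrs.2.trans_le hq)

theorem map_lowerSum_le {Y : Module.End ℂ V} (hY : ∀ r s, ∀ v ∈ I r s, Y v ∈ I r s) (p q : ℤ) :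
    (lowerSum I p q).map Y ≤ lowerSum I p q := by
  simp only [lowerSum, Submodule.map_iSup]
  exact iSup₂_mono fun rs _ => Submodule.map_le_iff_le_comap.mpr fun v hv => hY _ _ v hv

theorem IsDeligneBigrading.map_conj_lowerSum_le {c : Conjugation V} {F W : ℤ → Submodule ℂ V}
    (hI : IsDeligneBigrading c F W I) (p q : ℤ) :
    (lowerSum I q p).map c.toFun ≤ lowerSum I p q := by
  simp only [lowerSum, Submodule.map_iSup]
  refine iSup₂_le fun rs hrs => Submodule.map_le_iff_le_comap.mpr fun v hv => ?_
  have hle : I rs.2 rs.1 ⊔ lowerSum I rs.2 rs.1 ≤ lowerSum I p q :=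
    sup_le (le_lowerSum hrs.2 hrs.1) (lowerSum_mono hrs.2.le hrs.1.le)
  exact hle (hI.conj_cond rs.1 rs.2 v hv)

theorem IsDeligneBigrading.sub_conjEnd_apply_mem_lowerSum {c : Conjugation V}
    {F W : ℤ → Submodule ℂ V} (hI : IsDeligneBigrading c F W I) {Y : Module.End ℂ V}
    (hY : ∀ p q : ℤ, ∀ v ∈ I p q, Y v = ((p + q : ℤ) : ℂ) • v) {p q : ℤ} {v : V}
    (hv : v ∈ I p q) : (Y - conjEnd c Y) v ∈ lowerSum I p q := by
  obtain ⟨w, hw, u, hu, hwu⟩ := Submodule.mem_sup.mp (hI.conj_cond p q v hv)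
  set n : ℂ := ((p + q : ℤ) : ℂ)
  have hconj_smul : ∀ x, c.toFun (n • x) = n • c.toFun x := fun x => by
    rw [map_smulₛₗ, map_intCast]
  have hYw : Y w = n • w := by rw [hY q p w hw, add_comm q p]
  have hYu : n • u - Y u ∈ lowerSum I q p :=
    sub_mem (Submodule.smul_mem _ n hu) (map_lowerSum_le
      (fun r s x hx => (hY r s x hx).symm ▸ Submodule.smul_mem _ _ hx) q p ⟨u, hu, rfl⟩)
  have hv_eq : (Y - conjEnd c Y) v = c.toFun (n • u - Y u) := calc
    (Y - conjEnd c Y) v = n • c.toFun (c.toFun v) - c.toFun (Y (c.toFun v)) := by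
      rw [LinearMap.sub_apply, hY p q v hv, c.invol]; rfl
    _ = c.toFun (n • (w + u) - (n • w + Y u)) := by
      rw [← hwu, map_add Y, hYw, map_sub, hconj_smul]
    _ = c.toFun (n • u - Y u) := by rw [smul_add, add_sub_add_left_eq_sub]
  exact hI.map_conj_lowerSum_le p q ⟨_, hYu, hv_eq.symm⟩

theorem homogeneousEnd_le_glrs (I : ℤ → ℤ → Submodule ℂ V) (d : ℤ × ℤ) :
    homogeneousEnd (fun pq : ℤ × ℤ => I pq.1 pq.2) d ≤ glrs I d.1 d.2 :=
  fun _ hf p q v hv => hf (p, q) v hv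

end DeligneBigrading

theorem deligne_grading_sub_conj_mem_Lambda_general
    {V : Type*} [AddCommGroup V] [Module ℂ V] [FiniteDimensional ℂ V]
    (c : Conjugation V) (F W : ℤ → Submodule ℂ V)
    (I : ℤ → ℤ → Submodule ℂ V) (hI : IsDeligneBigrading c F W I)
    (Y : Module.End ℂ V)
    (hY : ∀ p q : ℤ, ∀ v ∈ I p q, Y v = ((p + q : ℤ) : ℂ) • v) :
    Y - conjEnd c Y ∈ Lambda I := by
  have hfin := WellFoundedGT.finite_ne_bot_of_iSupIndep hI.internal.submodule_iSupIndep
  have hmem := mem_iSup_homogeneousEnd_of_mem_iSup hI.internal hfin {d | d.1 < 0 ∧ d.2 < 0}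
    fun j v hv => by
      simpa only [lowerSum, Set.mem_ofPred_eq, Prod.fst_sub, Prod.snd_sub, sub_neg] using
        hI.sub_conjEnd_apply_mem_lowerSum hY hv
  exact iSup₂_mono (fun d _ => homogeneousEnd_le_glrs I d) hmem

/-- The Deligne grading `Y` of a mixed Hodge structure (acting as `p+q` on `I^{p,q}`)
satisfies `Y - Ȳ ∈ Λ_{(F,W)}`. -/
theorem deligne_grading_sub_conj_mem_Lambda
    {V : Type*} [AddCommGroup V] [Module ℂ V] [FiniteDimensional ℂ V]
    (c : Conjugation V) (F W : ℤ → Submodule ℂ V) (h : IsMHS c F W)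
    (I : ℤ → ℤ → Submodule ℂ V) (hI : IsDeligneBigrading c F W I)
    (Y : Module.End ℂ V)
    (hY : ∀ p q : ℤ, ∀ v ∈ I p q, Y v = ((p + q : ℤ) : ℂ) • v) :
    Y - conjEnd c Y ∈ Lambda I :=
  deligne_grading_sub_conj_mem_Lambda_general c F W I hI Y hY
end
end

section
/- Let (F,W) be a mixed Hodge structure on V whose Deligne bigrading satisfies I^{p,q} = 0 unless p+q = 2k−1 or (p,q) = (k,k) or (p,q) = (k−1,k−1), for some fixed integer k. Then Λ_{(F,W)} = {α ∈ End(V) : α(W_j) ⊆ W_{j−2} for all j}. -/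
open Complex

noncomputable section

/-- The subspace `Lie_{-2}(W) = {α ∈ End(V) : α(W_j) ⊆ W_{j-2} for all j}`. -/
def LieMinusTwo {V : Type*} [AddCommGroup V] [Module ℂ V]
    (W : ℤ → Submodule ℂ V) : Submodule ℂ (Module.End ℂ V) where
  carrier := {α | ∀ j : ℤ, ∀ v ∈ W j, α v ∈ W (j - 2)}
  add_mem' := by
    intro α β hα hβ j v hv
    simpa [LinearMap.add_apply] using Submodule.add_mem _ (hα j v hv) (hβ j v hv)
  zero_mem' := by
    intro j v hv
    simp
  smul_mem' := by
    intro t α hα j v hv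
    simpa [LinearMap.smul_apply] using Submodule.smul_mem _ t (hα j v hv)

section WeightFiltration

variable {V : Type*} [AddCommGroup V] [Module ℂ V]
  {I : ℤ → ℤ → Submodule ℂ V} {W : ℤ → Submodule ℂ V}

theorem weight_le_of_forall
    (hW : ∀ k : ℤ, W k = ⨆ pq : ℤ × ℤ, ⨆ _ : pq.1 + pq.2 ≤ k, I pq.1 pq.2)
    {j : ℤ} {S : Submodule ℂ V} (hS : ∀ p q : ℤ, p + q ≤ j → I p q ≤ S) : W j ≤ S := by
  rw [hW j]
  exact iSup_le fun pq => iSup_le fun hpq => hS pq.1 pq.2 hpq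

theorem bigrading_le_weight
    (hW : ∀ k : ℤ, W k = ⨆ pq : ℤ × ℤ, ⨆ _ : pq.1 + pq.2 ≤ k, I pq.1 pq.2)
    {p q j : ℤ} (hpq : p + q ≤ j) : I p q ≤ W j := by
  rw [hW j]
  exact le_iSup₂_of_le (p, q) hpq le_rfl

theorem monotone_weight
    (hW : ∀ k : ℤ, W k = ⨆ pq : ℤ × ℤ, ⨆ _ : pq.1 + pq.2 ≤ k, I pq.1 pq.2) :
    Monotone W := fun _ _ hjl =>
  weight_le_of_forall hW fun _ _ hpq => bigrading_le_weight hW (hpq.trans hjl)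

theorem glrs_le_LieMinusTwo
    (hW : ∀ k : ℤ, W k = ⨆ pq : ℤ × ℤ, ⨆ _ : pq.1 + pq.2 ≤ k, I pq.1 pq.2)
    {r s : ℤ} (hrs : r + s ≤ -2) : glrs I r s ≤ LieMinusTwo W := by
  intro α hα j v hv
  have hWj : W j ≤ (W (j - 2)).comap α :=
    weight_le_of_forall hW fun p q hpq x hx =>
      bigrading_le_weight hW (by omega) (hα p q x hx)
  exact hWj hv

theorem glrs_le_Lambda {r s : ℤ} (hr : r < 0) (hs : s < 0) : glrs I r s ≤ Lambda I :=
  le_iSup₂_of_le (r, s) ⟨hr, hs⟩ le_rfl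

theorem Lambda_le_LieMinusTwo
    (hW : ∀ k : ℤ, W k = ⨆ pq : ℤ × ℤ, ⨆ _ : pq.1 + pq.2 ≤ k, I pq.1 pq.2) :
    Lambda I ≤ LieMinusTwo W :=
  iSup₂_le fun _ hrs => glrs_le_LieMinusTwo hW (by omega)

/-- For type (II) the weights stop at `2k - 2`, where only `I^{k-1,k-1}` lives, so an
endomorphism lowering weights by two must map `I^{k,k}` to `I^{k-1,k-1}` and kill the rest. -/
theorem LieMinusTwo_le_glrs_of_typeII
    (hW : ∀ k : ℤ, W k = ⨆ pq : ℤ × ℤ, ⨆ _ : pq.1 + pq.2 ≤ k, I pq.1 pq.2) {k : ℤ}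
    (hvan : ∀ p q : ℤ,
      ¬(p + q = 2 * k - 1 ∨ (p = k ∧ q = k) ∨ (p = k - 1 ∧ q = k - 1)) → I p q = ⊥) :
    LieMinusTwo W ≤ glrs I (-1) (-1) := by
  have hbot : ∀ j, j ≤ 2 * k - 3 → W j = ⊥ := fun j hj =>
    le_bot_iff.mp <| weight_le_of_forall hW fun p q hpq => (hvan p q (by omega)).le
  have htop : W (2 * k - 2) ≤ I (k - 1) (k - 1) :=
    weight_le_of_forall hW fun p q hpq => by
      by_cases hc : p = k - 1 ∧ q = k - 1
      · rw [hc.1, hc.2]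
      · exact (hvan p q (by omega)).trans_le bot_le
  intro α hα p q v hv
  have hαv : α v ∈ W (p + q - 2) := hα _ v (bigrading_le_weight hW le_rfl hv)
  by_cases hlow : p + q ≤ 2 * k - 1
  · rw [hbot _ (by omega), Submodule.mem_bot] at hαv
    rw [hαv]
    exact zero_mem _
  · by_cases hkk : p = k ∧ q = k
    · obtain ⟨rfl, rfl⟩ := hkk
      exact htop (monotone_weight hW (by omega) hαv)
    · rw [hvan p q (by omega), Submodule.mem_bot] at hv
      rw [hv, map_zero]
      exact zero_mem _

end WeightFiltration

theorem typeII_Lambda_eq_LieMinusTwo_general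
    {V : Type*} [AddCommGroup V] [Module ℂ V]
    (c : Conjugation V) (F W : ℤ → Submodule ℂ V)
    (I : ℤ → ℤ → Submodule ℂ V) (hI : IsDeligneBigrading c F W I)
    (k : ℤ)
    (hvan : ∀ p q : ℤ,
      ¬(p + q = 2 * k - 1 ∨ (p = k ∧ q = k) ∨ (p = k - 1 ∧ q = k - 1)) → I p q = ⊥) :
    Lambda I = LieMinusTwo W :=
  le_antisymm (Lambda_le_LieMinusTwo hI.hW)
    ((LieMinusTwo_le_glrs_of_typeII hI.hW hvan).trans (glrs_le_Lambda (by norm_num) (by norm_num)))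

/-- For a mixed Hodge structure of type (II) (nonzero `I^{p,q}` only for
`p+q = 2k-1`, `(k,k)` and `(k-1,k-1)`), one has
`Λ_{(F,W)} = {α : α(W_j) ⊆ W_{j-2} for all j}`. -/
theorem typeII_Lambda_eq_LieMinusTwo
    {V : Type*} [AddCommGroup V] [Module ℂ V] [FiniteDimensional ℂ V]
    (c : Conjugation V) (F W : ℤ → Submodule ℂ V) (h : IsMHS c F W)
    (I : ℤ → ℤ → Submodule ℂ V) (hI : IsDeligneBigrading c F W I)
    (k : ℤ)
    (hvan : ∀ p q : ℤ,
      ¬(p + q = 2 * k - 1 ∨ (p = k ∧ q = k) ∨ (p = k - 1 ∧ q = k - 1)) → I p q = ⊥) :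
    Lambda I = LieMinusTwo W :=
  typeII_Lambda_eq_LieMinusTwo_general c F W I hI k hvan
end
end

section
/- Let W = (W_j)_{j∈ℤ} be a finite increasing filtration of V by real subspaces with W_m = V and W_{m−3} = 0 for some integer m. Suppose g ∈ GL(V) satisfies g(W_j) = W_j for all j, and for every j the automorphism induced by g on the quotient W_j/W_{j−2} commutes with the conjugation induced on W_j/W_{j−2}. Then g factors as g = r·u, where r ∈ GL(V) commutes with conjugation and satisfies r(W_j) = W_j for all j, and u ∈ GL(V) satisfies (u − 1)(W_j) ⊆ W_{j−2} for all j. -/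
/-!
Put `h = c ∘ g ∘ c`. The hypothesis on `g` says that `N = ½ g⁻¹ (h - g)` lowers `W` by two, so
`N² = 0` because `W` has length three. Hence `1 + N` is invertible with inverse `1 - N`, and
`r = g (1 + N) = ½ (g + h)` is real, while `u = (1 + N)⁻¹ = 1 - N`.
-/

open Complex

noncomputable section

namespace Conjugation

variable {V : Type*} [AddCommGroup V] [Module ℂ V] (c : Conjugation V)

def conjMap (f : V →ₗ[ℂ] V) : V →ₗ[ℂ] V where
  toFun v := c.toFun (f (c.toFun v))
  map_add' x y := by simp only [map_add]
  map_smul' a v := by simp only [map_smulₛₗ, starRingEnd_self_apply, RingHom.id_apply]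

@[simp]
lemma conjMap_apply (f : V →ₗ[ℂ] V) (v : V) : c.conjMap f v = c.toFun (f (c.toFun v)) := rfl

def realPart (f : V →ₗ[ℂ] V) : V →ₗ[ℂ] V := (2⁻¹ : ℂ) • (f + c.conjMap f)

lemma realPart_apply_conj (f : V →ₗ[ℂ] V) (v : V) :
    c.realPart f (c.toFun v) = c.toFun (c.realPart f v) := by
  have h2 : starRingEnd ℂ (2⁻¹ : ℂ) = 2⁻¹ := by simp [map_ofNat]
  simp only [realPart, LinearMap.smul_apply, LinearMap.add_apply, conjMap_apply, c.invol,
    map_smulₛₗ, map_add, h2, add_comm]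

end Conjugation

namespace LinearEquiv

variable {R M : Type*} [Ring R] [AddCommGroup M] [Module R M]

def oneAddOfMulSelfEqZero (N : Module.End R M) (hN : N * N = 0) : M ≃ₗ[R] M :=
  ofLinearMap (1 + N) (1 - N)
    (calc (1 + N) * (1 - N) = 1 - N * N := by noncomm_ring
      _ = 1 := by rw [hN, sub_zero])
    (calc (1 - N) * (1 + N) = 1 - N * N := by noncomm_ring
      _ = 1 := by rw [hN, sub_zero])

@[simp]
lemma oneAddOfMulSelfEqZero_apply (N : Module.End R M) (hN : N * N = 0) (v : M) :
    oneAddOfMulSelfEqZero N hN v = v + N v := rfl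

@[simp]
lemma oneAddOfMulSelfEqZero_symm_apply (N : Module.End R M) (hN : N * N = 0) (v : M) :
    (oneAddOfMulSelfEqZero N hN).symm v = v - N v := rfl

end LinearEquiv

section Filtration

variable {R M : Type*} [CommRing R] [AddCommGroup M] [Module R M]

def LowersFiltration (W : ℤ → Submodule R M) (k : ℤ) (f : M →ₗ[R] M) : Prop :=
  ∀ j, ∀ v ∈ W j, f v ∈ W (j - k)

namespace LowersFiltration

variable {W : ℤ → Submodule R M} {k l : ℤ} {f g : M →ₗ[R] M}

lemma comp (hf : LowersFiltration W k f) (hg : LowersFiltration W l g) :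
    LowersFiltration W (k + l) (g ∘ₗ f) := fun j v hv => by
  rw [LinearMap.comp_apply, ← sub_sub]
  exact hg _ _ (hf j v hv)

lemma smul (hf : LowersFiltration W k f) (a : R) : LowersFiltration W k (a • f) :=
  fun j v hv => (W (j - k)).smul_mem a (hf j v hv)

lemma mem (hmono : Monotone W) (hf : LowersFiltration W k f) (hk : 0 ≤ k) {j : ℤ} {v : M}
    (hv : v ∈ W j) : f v ∈ W j :=
  hmono (by omega) (hf j v hv)

lemma eq_zero (hmono : Monotone W) {m n : ℤ} (htop : W m = ⊤) (hbot : W n = ⊥) (hk : m - k ≤ n)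
    (hf : LowersFiltration W k f) : f = 0 := by
  ext v
  have hv : f v ∈ W n := hmono hk (hf m v (htop ▸ Submodule.mem_top))
  simpa [hbot] using hv

lemma map_oneAddOfMulSelfEqZero (hmono : Monotone W) (hf : LowersFiltration W k f) (hk : 0 ≤ k)
    (hf2 : f * f = 0) (j : ℤ) :
    (W j).map (LinearEquiv.oneAddOfMulSelfEqZero f hf2 : M →ₗ[R] M) = W j := by
  refine le_antisymm ?_ fun v hv => ?_
  · rintro _ ⟨v, hv, rfl⟩
    exact (W j).add_mem hv (hf.mem hmono hk hv)
  · rw [Submodule.mem_map_equiv, LinearEquiv.oneAddOfMulSelfEqZero_symm_apply]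
    exact (W j).sub_mem hv (hf.mem hmono hk hv)

end LowersFiltration

lemma lowersFiltration_zero_symm {W : ℤ → Submodule R M} (e : M ≃ₗ[R] M)
    (he : ∀ j, (W j).map (e : M →ₗ[R] M) = W j) : LowersFiltration W 0 e.symm := fun j v hv => by
  rw [sub_zero, LinearEquiv.coe_coe, ← Submodule.mem_map_equiv, he]
  exact hv

end Filtration

theorem factor_real_unipotent_general
    {V : Type*} [AddCommGroup V] [Module ℂ V]
    (c : Conjugation V) (W : ℤ → Submodule ℂ V) (hmono : Monotone W)
    (hreal : ∀ j, ∀ v ∈ W j, c.toFun v ∈ W j)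
    (m : ℤ) (htop : W m = ⊤) (hbot : W (m - 3) = ⊥)
    (g : V ≃ₗ[ℂ] V) (hgW : ∀ j, (W j).map (g : V →ₗ[ℂ] V) = W j)
    (hcomm : ∀ j, ∀ v ∈ W j, g (c.toFun v) - c.toFun (g v) ∈ W (j - 2)) :
    ∃ r u : V ≃ₗ[ℂ] V,
      (∀ v, g v = r (u v)) ∧
      (∀ v, r (c.toFun v) = c.toFun (r v)) ∧
      (∀ j, (W j).map (r : V →ₗ[ℂ] V) = W j) ∧
      (∀ j, ∀ v ∈ W j, u v - v ∈ W (j - 2)) := by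
  have hdefect : LowersFiltration W 2 (c.conjMap g - g.toLinearMap) := fun j v hv => by
    simpa [c.invol] using (W (j - 2)).neg_mem (hcomm j _ (hreal j v hv))
  set N : Module.End ℂ V := (2⁻¹ : ℂ) • (g.symm.toLinearMap ∘ₗ (c.conjMap g - g.toLinearMap))
    with hNdef
  have hN : LowersFiltration W 2 N := by
    simpa using (hdefect.comp (lowersFiltration_zero_symm g hgW)).smul (2⁻¹ : ℂ)
  have hN2 : N * N = 0 := (hN.comp hN).eq_zero hmono htop hbot (by omega)
  set a := LinearEquiv.oneAddOfMulSelfEqZero N hN2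
  have hr : ∀ v, g (a v) = c.realPart g v := fun v => by
    simp only [a, hNdef, LinearEquiv.oneAddOfMulSelfEqZero_apply, LinearMap.smul_apply,
      LinearMap.comp_apply, LinearEquiv.coe_coe, LinearMap.sub_apply, Conjugation.conjMap_apply,
      map_add, map_smul, LinearEquiv.apply_symm_apply, Conjugation.realPart, LinearMap.add_apply]
    module
  refine ⟨a.trans g, a.symm, fun v => by simp, fun v => by simp [hr, c.realPart_apply_conj],
    fun j => ?_, fun j v hv => ?_⟩
  · rw [LinearEquiv.coe_trans, Submodule.map_comp, hN.map_oneAddOfMulSelfEqZero hmono zero_le_two,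
      hgW]
  · simpa [a] using (W (j - 2)).neg_mem (hN j v hv)

/-- **Factorization.** If `g ∈ GL(V)` preserves a real filtration `W` of length three
and induces, on every quotient `W_j/W_{j-2}`, an automorphism commuting with the
induced conjugation, then `g = r·u` with `r` real preserving `W` and
`(u - 1)(W_j) ⊆ W_{j-2}`. -/
theorem factor_real_unipotent
    {V : Type*} [AddCommGroup V] [Module ℂ V] [FiniteDimensional ℂ V]
    (c : Conjugation V) (W : ℤ → Submodule ℂ V) (hmono : Monotone W)
    (hreal : ∀ j, ∀ v ∈ W j, c.toFun v ∈ W j)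
    (m : ℤ) (htop : W m = ⊤) (hbot : W (m - 3) = ⊥)
    (g : V ≃ₗ[ℂ] V) (hgW : ∀ j, (W j).map (g : V →ₗ[ℂ] V) = W j)
    (hcomm : ∀ j, ∀ v ∈ W j, g (c.toFun v) - c.toFun (g v) ∈ W (j - 2)) :
    ∃ r u : V ≃ₗ[ℂ] V,
      (∀ v, g v = r (u v)) ∧
      (∀ v, r (c.toFun v) = c.toFun (r v)) ∧
      (∀ j, (W j).map (r : V →ₗ[ℂ] V) = W j) ∧
      (∀ j, ∀ v ∈ W j, u v - v ∈ W (j - 2)) :=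
  factor_real_unipotent_general c W hmono hreal m htop hbot g hgW hcomm
end
end

section
/- Let (F,W) be a mixed Hodge structure on V and let N ∈ End(V) be real (commuting with conjugation) with N(W_k) ⊆ W_k for all k and N(F^p) ⊆ F^{p−1} for all p. Write N = Σ_{r,s} N^{r,s} for the decomposition of N with respect to the bigrading gl^{r,s}_{(F,W)} of End(V). Then N^{r,s} = 0 whenever r ≥ 1 and (r,s) ≠ (1,−1); consequently N = N^{1,−1} + N^{0,0} + N^{−1,1} + Σ_{k>0} N^{−1,1−k} + Σ_{k>0} N^{0,−k}. -/
open Complex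

noncomputable section

/-!
Write `N^{r,s}` for the components of `N`. Since `N` preserves `W`, `N^{r,s} = 0` when
`r + s > 0`; since `N` lowers `F` by at most one, `N^{r,s} = 0` when `r < -1`. The remaining
components, `r ≥ 1` and `s ≤ -2`, are killed by realness. For `v ∈ I^{p,q}`,
`conj (N v) = N (conj v)` with `conj v ∈ I^{q,p} + Σ_{i<q, j<p} I^{i,j}`, and the two facts above
show that `N` maps this into the complement of `I^{q+s,p+r}`. On the other hand, once the
components `N^{r',s'}` with `r' > r`, `s' > s` are known to vanish, the `(q+s,p+r)`-component of
`conj (N v)` is that of `conj (N^{r,s} v)`, and conjugation followed by projection is injective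
from `I^{a,b}` to `I^{b,a}`. A descending induction on `s` concludes.
-/

open DirectSum Function

section Bigrading

variable {R V : Type*} [Semiring R] [AddCommMonoid V] [Module R V]
  (I : ℤ → ℤ → Submodule R V) [Decomposition (uncurry I)]

def bigradingProj (a b : ℤ) : V →ₗ[R] V :=
  (I a b).subtype ∘ₗ component R (ℤ × ℤ) (fun pq => ↥(uncurry I pq)) (a, b) ∘ₗ
    (decomposeLinearEquiv (uncurry I)).toLinearMap

variable {I}

theorem bigradingProj_of_mem_same {a b : ℤ} {x : V} (hx : x ∈ I a b) :
    bigradingProj I a b x = x :=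
  decompose_of_mem_same (uncurry I) (i := (a, b)) hx

theorem bigradingProj_of_mem_ne {i j a b : ℤ} {x : V} (hx : x ∈ I i j) (h : (i, j) ≠ (a, b)) :
    bigradingProj I a b x = 0 :=
  decompose_of_mem_ne (uncurry I) (i := (i, j)) hx h

theorem bigradingProj_mem (a b : ℤ) (x : V) : bigradingProj I a b x ∈ I a b :=
  (decompose (uncurry I) x (a, b)).2

theorem bigradingProj_eq_zero_of_mem_iSup {P : ℤ × ℤ → Prop} {x : V}
    (hx : x ∈ ⨆ pq : ℤ × ℤ, ⨆ _ : P pq, I pq.1 pq.2) {a b : ℤ} (hab : ¬ P (a, b)) :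
    bigradingProj I a b x = 0 := by
  refine (iSup₂_le fun pq hpq y hy => ?_ : _ ≤ LinearMap.ker (bigradingProj I a b)) hx
  exact bigradingProj_of_mem_ne hy fun h => hab (h ▸ hpq)

theorem linearMap_eq_zero_of_forall_mem {M : Type*} [AddCommMonoid M] [Module R M]
    {f : V →ₗ[R] M} (h : ∀ p q, ∀ v ∈ I p q, f v = 0) : f = 0 :=
  decompose_lhom_ext (uncurry I) fun pq => LinearMap.ext fun v => h pq.1 pq.2 v v.2

end Bigrading

section Components

variable {V : Type*} [AddCommGroup V] [Module ℂ V]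
  {I : ℤ → ℤ → Submodule ℂ V} [Decomposition (uncurry I)]
  {Ncomp : ℤ × ℤ → Module.End ℂ V} {S : Finset (ℤ × ℤ)}

theorem bigradingProj_sum_apply (hmem : ∀ rs : ℤ × ℤ, Ncomp rs ∈ glrs I rs.1 rs.2)
    (hsupp : ∀ rs ∉ S, Ncomp rs = 0) {p q : ℤ} {v : V} (hv : v ∈ I p q) (r s : ℤ) :
    bigradingProj I (p + r) (q + s) ((∑ rs ∈ S, Ncomp rs) v) = Ncomp (r, s) v := by
  have hterm : ∀ rs, bigradingProj I (p + r) (q + s) (Ncomp rs v) =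
      if rs = (r, s) then Ncomp rs v else 0 := by
    rintro ⟨r', s'⟩
    split_ifs with h
    · obtain ⟨rfl, rfl⟩ := Prod.mk.inj h
      exact bigradingProj_of_mem_same (hmem (r', s') p q v hv)
    · refine bigradingProj_of_mem_ne (hmem (r', s') p q v hv) fun h' => h ?_
      simp only [Prod.mk.injEq] at h' ⊢
      omega
  rw [LinearMap.sum_apply, map_sum, Finset.sum_congr rfl fun rs _ => hterm rs,
    Finset.sum_ite_eq']
  split_ifs with h
  · rfl
  · rw [hsupp _ h, LinearMap.zero_apply]

theorem eq_zero_of_bigradingProj_sum_apply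
    (hmem : ∀ rs : ℤ × ℤ, Ncomp rs ∈ glrs I rs.1 rs.2) (hsupp : ∀ rs ∉ S, Ncomp rs = 0)
    {r s : ℤ} (h : ∀ p q, ∀ v ∈ I p q,
      bigradingProj I (p + r) (q + s) ((∑ rs ∈ S, Ncomp rs) v) = 0) :
    Ncomp (r, s) = 0 :=
  linearMap_eq_zero_of_forall_mem fun p q v hv =>
    (bigradingProj_sum_apply hmem hsupp hv r s).symm.trans (h p q v hv)

end Components

def lowerPart {R V : Type*} [Semiring R] [AddCommMonoid V] [Module R V]
    (I : ℤ → ℤ → Submodule R V) (a b : ℤ) : Submodule R V :=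
  ⨆ pq : ℤ × ℤ, ⨆ _ : pq.1 < a ∧ pq.2 < b, I pq.1 pq.2

namespace IsDeligneBigrading

variable {V : Type*} [AddCommGroup V] [Module ℂ V] {c : Conjugation V}
  {F W : ℤ → Submodule ℂ V} {I : ℤ → ℤ → Submodule ℂ V}

theorem conj_mem_sup_lowerPart (hI : IsDeligneBigrading c F W I) {p q : ℤ} {v : V}
    (hv : v ∈ I p q) : c.toFun v ∈ I q p ⊔ lowerPart I q p :=
  hI.conj_cond p q v hv

theorem conj_mem_lowerPart (hI : IsDeligneBigrading c F W I) {a b : ℤ} {z : V}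
    (hz : z ∈ lowerPart I a b) : c.toFun z ∈ lowerPart I b a := by
  refine (iSup₂_le fun pq hpq y hy => ?_ : _ ≤ (lowerPart I b a).comap c.toFun) hz
  have hle : I pq.2 pq.1 ⊔ lowerPart I pq.2 pq.1 ≤ lowerPart I b a :=
    sup_le (le_iSup₂_of_le (pq.2, pq.1) ⟨hpq.2, hpq.1⟩ le_rfl)
      (iSup₂_mono' fun ij hij => ⟨ij, ⟨hij.1.trans hpq.2, hij.2.trans hpq.1⟩, le_rfl⟩)
  exact hle (hI.conj_mem_sup_lowerPart hy)

theorem mem_W (hI : IsDeligneBigrading c F W I) {p q : ℤ} {v : V} (hv : v ∈ I p q) :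
    v ∈ W (p + q) := by
  rw [hI.hW]
  exact Submodule.mem_iSup_of_mem (p, q) (Submodule.mem_iSup_of_mem le_rfl hv)

theorem mem_F (hI : IsDeligneBigrading c F W I) {p q : ℤ} {v : V} (hv : v ∈ I p q) :
    v ∈ F p := by
  rw [hI.hF]
  exact Submodule.mem_iSup_of_mem (p, q) (Submodule.mem_iSup_of_mem le_rfl hv)

variable [Decomposition (uncurry I)]

theorem bigradingProj_conj_of_mem (hI : IsDeligneBigrading c F W I) {i j a b : ℤ} {x : V}
    (hx : x ∈ I i j) (hne : (i, j) ≠ (a, b)) (hlt : ¬ (a < i ∧ b < j)) :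
    bigradingProj I b a (c.toFun x) = 0 := by
  obtain ⟨y, hy, z, hz, hyz⟩ := Submodule.mem_sup.mp (hI.conj_mem_sup_lowerPart hx)
  have hji : (j, i) ≠ (b, a) := fun h => by obtain ⟨rfl, rfl⟩ := Prod.mk.inj h; exact hne rfl
  rw [← hyz, map_add, bigradingProj_of_mem_ne hy hji, zero_add]
  exact bigradingProj_eq_zero_of_mem_iSup hz fun h => hlt ⟨h.2, h.1⟩

theorem eq_zero_of_bigradingProj_conj (hI : IsDeligneBigrading c F W I) {a b : ℤ} {x : V}
    (hx : x ∈ I a b) (h : bigradingProj I b a (c.toFun x) = 0) : x = 0 := by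
  obtain ⟨y, hy, z, hz, hyz⟩ := Submodule.mem_sup.mp (hI.conj_mem_sup_lowerPart hx)
  have hy0 : y = 0 := by
    rw [← hyz, map_add, bigradingProj_of_mem_same hy,
      bigradingProj_eq_zero_of_mem_iSup hz (lt_irrefl b ∘ And.left), add_zero] at h
    exact h
  have hxz : x = c.toFun z := by rw [← c.invol x, ← hyz, hy0, zero_add]
  have hlow : x ∈ lowerPart I a b := hxz ▸ hI.conj_mem_lowerPart hz
  rw [← bigradingProj_of_mem_same hx]
  exact bigradingProj_eq_zero_of_mem_iSup hlow (lt_irrefl a ∘ And.left)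

theorem bigradingProj_conj_eq (hI : IsDeligneBigrading c F W I) {a b : ℤ} {x : V}
    (hup : ∀ i j, a < i → b < j → bigradingProj I i j x = 0) :
    bigradingProj I b a (c.toFun x) = bigradingProj I b a (c.toFun (bigradingProj I a b x)) := by
  classical
  conv_lhs => rw [← sum_support_decompose (uncurry I) x]
  rw [map_sum, map_sum]
  refine Finset.sum_eq_single (a, b) (fun ij _ hne => ?_) fun hab => ?_
  · by_cases hlt : a < ij.1 ∧ b < ij.2
    · change bigradingProj I b a (c.toFun (bigradingProj I ij.1 ij.2 x)) = 0
      rw [hup _ _ hlt.1 hlt.2, map_zero, map_zero]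
    · exact hI.bigradingProj_conj_of_mem (bigradingProj_mem ij.1 ij.2 x) hne hlt
  · have hx0 : bigradingProj I a b x = 0 := by
      change ((decompose (uncurry I) x (a, b) : V)) = 0
      rw [DFinsupp.notMem_support_iff.mp hab, ZeroMemClass.coe_zero]
    change bigradingProj I b a (c.toFun (bigradingProj I a b x)) = 0
    rw [hx0, map_zero, map_zero]

theorem bigradingProj_eq_zero_of_conj (hI : IsDeligneBigrading c F W I) {a b : ℤ} {x : V}
    (hup : ∀ i j, a < i → b < j → bigradingProj I i j x = 0)
    (h : bigradingProj I b a (c.toFun x) = 0) : bigradingProj I a b x = 0 :=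
  hI.eq_zero_of_bigradingProj_conj (bigradingProj_mem a b x)
    ((hI.bigradingProj_conj_eq hup).symm.trans h)

variable {N : Module.End ℂ V}

theorem bigradingProj_apply_eq_zero_of_mapsTo_W (hI : IsDeligneBigrading c F W I)
    (hNW : ∀ k : ℤ, ∀ v ∈ W k, N v ∈ W k) {p q a b : ℤ} {v : V} (hv : v ∈ I p q)
    (hab : p + q < a + b) : bigradingProj I a b (N v) = 0 := by
  have hNv := hNW (p + q) v (hI.mem_W hv)
  rw [hI.hW] at hNv
  exact bigradingProj_eq_zero_of_mem_iSup hNv hab.not_ge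

theorem bigradingProj_apply_eq_zero_of_mapsTo_F (hI : IsDeligneBigrading c F W I)
    (hNF : ∀ p : ℤ, ∀ v ∈ F p, N v ∈ F (p - 1)) {p q a b : ℤ} {v : V} (hv : v ∈ I p q)
    (ha : a + 1 < p) : bigradingProj I a b (N v) = 0 := by
  have hNv := hNF p v (hI.mem_F hv)
  rw [hI.hF] at hNv
  exact bigradingProj_eq_zero_of_mem_iSup hNv (by omega)

theorem bigradingProj_conj_apply_eq_zero (hI : IsDeligneBigrading c F W I)
    (hNreal : ∀ v, N (c.toFun v) = c.toFun (N v)) (hNW : ∀ k : ℤ, ∀ v ∈ W k, N v ∈ W k)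
    (hNF : ∀ p : ℤ, ∀ v ∈ F p, N v ∈ F (p - 1)) {p q a b : ℤ} {v : V} (hv : v ∈ I p q)
    (ha : p < a) (hb : b + 2 ≤ q) : bigradingProj I b a (c.toFun (N v)) = 0 := by
  obtain ⟨w, hw, u, hu, hwu⟩ := Submodule.mem_sup.mp (hI.conj_mem_sup_lowerPart hv)
  have hlow : lowerPart I q p ≤ LinearMap.ker (bigradingProj I b a ∘ₗ N) :=
    iSup₂_le fun ij hij y hy => by
      by_cases h : ij.1 + ij.2 < b + a
      · exact hI.bigradingProj_apply_eq_zero_of_mapsTo_W hNW hy h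
      · exact hI.bigradingProj_apply_eq_zero_of_mapsTo_F hNF hy (by omega)
  rw [← hNreal, ← hwu, map_add, map_add,
    hI.bigradingProj_apply_eq_zero_of_mapsTo_F hNF hw (by omega), zero_add]
  exact hlow hu

theorem bigradingProj_apply_eq_zero_of_horizontal_real (hI : IsDeligneBigrading c F W I)
    (hNreal : ∀ v, N (c.toFun v) = c.toFun (N v)) (hNW : ∀ k : ℤ, ∀ v ∈ W k, N v ∈ W k)
    (hNF : ∀ p : ℤ, ∀ v ∈ F p, N v ∈ F (p - 1)) {p q a b : ℤ} {v : V} (hv : v ∈ I p q)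
    (ha : p < a) (hb : b + 2 ≤ q) : bigradingProj I a b (N v) = 0 := by
  suffices key : ∀ n ≤ q - 1, ∀ j, n ≤ j → j + 2 ≤ q → ∀ i, p < i →
      bigradingProj I i j (N v) = 0 from
    key b (by omega) b le_rfl hb a ha
  intro n hn
  induction n, hn using Int.leInductionDown with
  | base => intro j hj hjq; omega
  | pred n hn ih =>
    intro j hj hjq i hi
    rcases hj.lt_or_eq with hj | rfl
    · exact ih j (by omega) hjq i hi
    · refine hI.bigradingProj_eq_zero_of_conj (fun i' j' hi' hj' => ?_)
        (hI.bigradingProj_conj_apply_eq_zero hNreal hNW hNF hv hi hjq)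
      by_cases h : p + q < i' + j'
      · exact hI.bigradingProj_apply_eq_zero_of_mapsTo_W hNW hv h
      · exact ih j' (by omega) (by omega) i' (by omega)

end IsDeligneBigrading

theorem sum_eq_of_support_horizontal {M : Type*} [AddCommMonoid M] {f : ℤ × ℤ → M}
    {S : Finset (ℤ × ℤ)} (hS : ∀ rs ∉ S, f rs = 0)
    (hf : ∀ r s, f (r, s) ≠ 0 →
      (r, s) = (1, -1) ∨ (r = 0 ∧ s ≤ 0) ∨ (r = -1 ∧ s ≤ 1)) :
    ∑ rs ∈ S, f rs = f (1, -1) + f (0, 0) + f (-1, 1)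
        + (∑ rs ∈ S.filter (fun rs => rs.1 = -1 ∧ rs.2 < 1), f rs)
        + (∑ rs ∈ S.filter (fun rs => rs.1 = 0 ∧ rs.2 < 0), f rs) := by
  have hsplit : ∀ rs, f rs = (if rs = (1, -1) then f rs else 0)
      + (if rs = (0, 0) then f rs else 0) + (if rs = (-1, 1) then f rs else 0)
      + (if rs.1 = -1 ∧ rs.2 < 1 then f rs else 0)
      + (if rs.1 = 0 ∧ rs.2 < 0 then f rs else 0) := by
    rintro ⟨r, s⟩
    by_cases h0 : f (r, s) = 0
    · simp [h0]
    · have := hf r s h0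
      simp only [Prod.mk.injEq] at this ⊢
      split_ifs <;> first | (exfalso; omega) | simp
  have hsingle : ∀ x, ∑ rs ∈ S, (if rs = x then f rs else 0) = f x := fun x => by
    rw [Finset.sum_ite_eq']
    exact ite_eq_left_iff.mpr fun hx => (hS x hx).symm
  rw [Finset.sum_congr rfl fun rs _ => hsplit rs]
  simp only [Finset.sum_add_distrib, hsingle, Finset.sum_filter]

theorem horizontal_real_endomorphism_components_general
    {V : Type*} [AddCommGroup V] [Module ℂ V]
    (c : Conjugation V) (F W : ℤ → Submodule ℂ V)
    (I : ℤ → ℤ → Submodule ℂ V) (hI : IsDeligneBigrading c F W I)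
    (N : Module.End ℂ V)
    (hNreal : ∀ v, N (c.toFun v) = c.toFun (N v))
    (hNW : ∀ k : ℤ, ∀ v ∈ W k, N v ∈ W k)
    (hNF : ∀ p : ℤ, ∀ v ∈ F p, N v ∈ F (p - 1))
    (Ncomp : ℤ × ℤ → Module.End ℂ V) (S : Finset (ℤ × ℤ))
    (hmem : ∀ rs : ℤ × ℤ, Ncomp rs ∈ glrs I rs.1 rs.2)
    (hsupp : ∀ rs ∉ S, Ncomp rs = 0)
    (hsum : N = ∑ rs ∈ S, Ncomp rs) :
    (∀ r s : ℤ, 1 ≤ r → (r, s) ≠ (1, -1) → Ncomp (r, s) = 0) ∧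
    N = Ncomp (1, -1) + Ncomp (0, 0) + Ncomp (-1, 1)
        + (∑ rs ∈ S.filter (fun rs => rs.1 = -1 ∧ rs.2 < 1), Ncomp rs)
        + (∑ rs ∈ S.filter (fun rs => rs.1 = 0 ∧ rs.2 < 0), Ncomp rs) := by
  let : Decomposition (uncurry I) := hI.internal.chooseDecomposition
  have hcomp : ∀ {r s : ℤ},
      (∀ p q, ∀ v ∈ I p q, bigradingProj I (p + r) (q + s) (N v) = 0) → Ncomp (r, s) = 0 :=
    fun h => eq_zero_of_bigradingProj_sum_apply hmem hsupp (hsum ▸ h)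
  have hW : ∀ r s, 0 < r + s → Ncomp (r, s) = 0 := fun r s hrs =>
    hcomp fun p q v hv => hI.bigradingProj_apply_eq_zero_of_mapsTo_W hNW hv (by omega)
  have hF : ∀ r s, r < -1 → Ncomp (r, s) = 0 := fun r s hr =>
    hcomp fun p q v hv => hI.bigradingProj_apply_eq_zero_of_mapsTo_F hNF hv (by omega)
  have hHodge : ∀ r s : ℤ, 1 ≤ r → (r, s) ≠ (1, -1) → Ncomp (r, s) = 0 := by
    intro r s hr hne
    by_cases hrs : 0 < r + s
    · exact hW r s hrs
    · have hs : s + 2 ≤ 0 := by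
        by_contra
        exact hne (Prod.ext (by omega) (by omega))
      exact hcomp fun p q v hv =>
        hI.bigradingProj_apply_eq_zero_of_horizontal_real hNreal hNW hNF hv (by omega) (by omega)
  refine ⟨hHodge, hsum.trans (sum_eq_of_support_horizontal hsupp fun r s hne => ?_)⟩
  by_cases hr : 1 ≤ r
  · exact .inl (by_contra fun h => hne (hHodge r s hr h))
  · have := mt (hW r s) hne
    have := mt (hF r s) hne
    omega

/-- **Hodge components of a horizontal real endomorphism** (Lemma 6.31):
if `N` is real, preserves `W` and shifts `F` by `-1`, then in the decomposition
`N = Σ N^{r,s}` the components with `r ≥ 1`, `(r,s) ≠ (1,-1)` vanish, and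
consequently `N = N^{1,-1} + N^{0,0} + N^{-1,1} + Σ_{k>0} N^{-1,1-k} + Σ_{k>0} N^{0,-k}`. -/
theorem horizontal_real_endomorphism_components
    {V : Type*} [AddCommGroup V] [Module ℂ V] [FiniteDimensional ℂ V]
    (c : Conjugation V) (F W : ℤ → Submodule ℂ V) (h : IsMHS c F W)
    (I : ℤ → ℤ → Submodule ℂ V) (hI : IsDeligneBigrading c F W I)
    (N : Module.End ℂ V)
    (hNreal : ∀ v, N (c.toFun v) = c.toFun (N v))
    (hNW : ∀ k : ℤ, ∀ v ∈ W k, N v ∈ W k)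
    (hNF : ∀ p : ℤ, ∀ v ∈ F p, N v ∈ F (p - 1))
    (Ncomp : ℤ × ℤ → Module.End ℂ V) (S : Finset (ℤ × ℤ))
    (hmem : ∀ rs : ℤ × ℤ, Ncomp rs ∈ glrs I rs.1 rs.2)
    (hsupp : ∀ rs ∉ S, Ncomp rs = 0)
    (hsum : N = ∑ rs ∈ S, Ncomp rs) :
    (∀ r s : ℤ, 1 ≤ r → (r, s) ≠ (1, -1) → Ncomp (r, s) = 0) ∧
    N = Ncomp (1, -1) + Ncomp (0, 0) + Ncomp (-1, 1)
        + (∑ rs ∈ S.filter (fun rs => rs.1 = -1 ∧ rs.2 < 1), Ncomp rs)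
        + (∑ rs ∈ S.filter (fun rs => rs.1 = 0 ∧ rs.2 < 0), Ncomp rs) :=
  horizontal_real_endomorphism_components_general c F W I hI N hNreal hNW hNF Ncomp S hmem hsupp
    hsum
end
end

section
/- Suppose β : (a,∞) → End(V) is differentiable, satisfies dβ/dy = −[β(y), L(β(y))], and for each y the components of β(y) vanish except possibly in bidegrees (1,−1), (0,0), (−1,1), (0,−k) for k > 0, and (−1,1−k) for k > 0. Define X^+(y) = 2i·β^{1,−1}(y), Z(y) = 2i·β^{0,0}(y), and X^−(y) = −2i·β^{−1,1}(y). Then −2·dX^+/dy = [Z, X^+], 2·dX^−/dy = [Z, X^−], and −dZ/dy = [X^+, X^−]. -/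
noncomputable section

/-- The bidegree-`(r,s)` part `gl^{r,s}` of the endomorphisms of `V` induced by a
bigrading `I` of `V`. -/
def glrsL {V : Type*} [NormedAddCommGroup V] [NormedSpace ℂ V]
    (I : ℤ → ℤ → Submodule ℂ V) (r s : ℤ) : Submodule ℂ (V →L[ℂ] V) where
  carrier := {α | ∀ p q : ℤ, ∀ v ∈ I p q, α v ∈ I (p + r) (q + s)}
  add_mem' := by
    intro α β hα hβ p q v hv
    simpa [ContinuousLinearMap.add_apply] using
      Submodule.add_mem _ (hα p q v hv) (hβ p q v hv)
  zero_mem' := by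
    intro p q v hv
    simp
  smul_mem' := by
    intro t α hα p q v hv
    simpa [ContinuousLinearMap.smul_apply] using Submodule.smul_mem _ t (hα p q v hv)


/-! The spaces `gl^{r,s}` form an independent family grading `End(V)` as an associative
algebra, and `L` acts on `gl^{r,s}` by a scalar `c(r,s) ∈ {i, 0, -i}`. Projecting the Lax
equation onto `gl^{t}` (a continuous linear map, `V` being finite-dimensional) therefore gives
`dβ^{t}/dy = -∑_{u + v = t} c(v) [β^{u}, β^{v}]`. Among the allowed bidegrees, the only pairs
summing to `(1,-1)`, `(-1,1)`, `(0,0)` are built from `(0,0)`, `(1,-1)`, `(-1,1)` (plus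
`(0,0) + (0,0)`), and since `c(0,0) = 0` the surviving terms are exactly Nahm's equations. -/

section GradedProjection

variable {K E ι : Type*} [Field K] [AddCommGroup E] [Module K E] [DecidableEq ι]

def componentProj (M : ι → Submodule K E) (i : ι) : E →ₗ[K] E :=
  (M i).subtype ∘ₗ DFinsupp.lapply i ∘ₗ (DFinsupp.lsum ℕ fun j => (M j).subtype).leftInverse

variable {M : ι → Submodule K E}

theorem iSupIndep.componentProj_apply_of_mem (h : iSupIndep M) (i : ι) {j : ι} {x : E}
    (hx : x ∈ M j) : componentProj M i x = if i = j then x else 0 := by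
  set f := DFinsupp.lsum ℕ fun j => (M j).subtype
  have hx' : f.leftInverse x = DFinsupp.single j ⟨x, hx⟩ := by
    have hfx : f (DFinsupp.single j ⟨x, hx⟩) = x := by simp [f]
    conv_lhs => rw [← hfx]
    exact LinearMap.leftInverse_apply_of_inj (LinearMap.ker_eq_bot.mpr h.dfinsupp_lsum_injective) _
  rw [componentProj, LinearMap.comp_apply, LinearMap.comp_apply, hx', DFinsupp.lapply_apply,
    DFinsupp.single_apply]
  by_cases hij : i = j
  · subst hij
    rw [dif_pos rfl, if_pos rfl]
    rfl
  · rw [dif_neg (Ne.symm hij), if_neg hij, map_zero]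

theorem iSupIndep.componentProj_sum (h : iSupIndep M) {S : Finset ι} {x : ι → E}
    (hx : ∀ j, x j ∈ M j) (hS : ∀ j ∉ S, x j = 0) (i : ι) :
    componentProj M i (∑ j ∈ S, x j) = x i := by
  simp_rw [map_sum, h.componentProj_apply_of_mem i (hx _), Finset.sum_ite_eq]
  split_ifs with hi
  · rfl
  · exact (hS i hi).symm

end GradedProjection

theorem SetLike.lie_mem_graded {K E ι : Type*} [Ring K] [Ring E] [Module K E] [AddCommMonoid ι]
    {M : ι → Submodule K E} [SetLike.GradedMul M] {i j : ι} {a b : E} (ha : a ∈ M i)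
    (hb : b ∈ M j) : ⁅a, b⁆ ∈ M (i + j) := by
  rw [Ring.lie_def]
  exact sub_mem (SetLike.GradedMul.mul_mem ha hb) (add_comm j i ▸ SetLike.GradedMul.mul_mem hb ha)

section GradedAlgebra

variable {K E ι : Type*} [Field K] [Ring E] [Algebra K E] [AddCommMonoid ι] [DecidableEq ι]
  {M : ι → Submodule K E} [SetLike.GradedMul M]

theorem iSupIndep.componentProj_lie_sum (h : iSupIndep M) {S : Finset ι} {x : ι → E}
    (hx : ∀ j, x j ∈ M j) (hS : ∀ j ∉ S, x j = 0) {A : Set ι} (hA : ∀ j ∉ A, x j = 0)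
    (c : ι → K) {t : ι} {P : Finset (ι × ι)}
    (hP : ∀ p, p ∈ P ↔ p.1 ∈ A ∧ p.2 ∈ A ∧ p.1 + p.2 = t) :
    componentProj M t ⁅∑ u ∈ S, x u, ∑ v ∈ S, c v • x v⁆ = ∑ p ∈ P, c p.2 • ⁅x p.1, x p.2⁆ := by
  have hproj : ∀ u v, componentProj M t (c v • ⁅x u, x v⁆) =
      if t = u + v then c v • ⁅x u, x v⁆ else 0 := fun u v => by
    rw [map_smul, h.componentProj_apply_of_mem t (SetLike.lie_mem_graded (hx u) (hx v)),
      smul_ite, smul_zero]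
  have hbilin : ⁅∑ u ∈ S, x u, ∑ v ∈ S, c v • x v⁆ = ∑ u ∈ S, ∑ v ∈ S, c v • ⁅x u, x v⁆ := by
    simp only [Ring.lie_def, Finset.sum_mul_sum, smul_sub, mul_smul_comm, smul_mul_assoc,
      Finset.sum_sub_distrib]
    rw [Finset.sum_comm (s := S) (t := S) (f := fun v u => c v • (x v * x u))]
  rw [hbilin, ← Finset.sum_product' (f := fun u v => c v • ⁅x u, x v⁆), map_sum]
  refine Finset.sum_congr_of_eq_on_inter ?_ ?_ ?_
  · rintro ⟨u, v⟩ - hp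
    rw [hproj]
    split_ifs with huv
    · by_cases hu : u ∈ A
      · by_cases hv : v ∈ A
        · exact absurd ((hP _).2 ⟨hu, hv, huv.symm⟩) hp
        · simp [Ring.lie_def, hA v hv]
      · simp [Ring.lie_def, hA u hu]
    · rfl
  · rintro ⟨u, v⟩ - hp
    rw [Finset.mem_product, not_and_or] at hp
    rcases hp with hu | hv
    · simp [Ring.lie_def, hS u hu]
    · simp [Ring.lie_def, hS v hv]
  · rintro ⟨u, v⟩ - hp
    rw [hproj, if_pos ((hP _).1 hp).2.2.symm]

end GradedAlgebra

theorem HasDerivAt.linearMap_comp {𝕜 E F : Type*} [NontriviallyNormedField 𝕜] [CompleteSpace 𝕜]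
    [NormedAddCommGroup E] [NormedSpace 𝕜 E] [FiniteDimensional 𝕜 E]
    [NormedAddCommGroup F] [NormedSpace 𝕜 F] (p : E →ₗ[𝕜] F) {f : 𝕜 → E} {f' : E} {y : 𝕜}
    (hf : HasDerivAt f f' y) : HasDerivAt (fun t => p (f t)) (p f') y :=
  (LinearMap.toContinuousLinearMap p).hasFDerivAt.comp_hasDerivAt y hf

theorem iSupIndep.hasDerivAt_component {E ι : Type*} [NormedAddCommGroup E] [NormedSpace ℂ E]
    [FiniteDimensional ℂ E] [DecidableEq ι] {M : ι → Submodule ℂ E} (h : iSupIndep M)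
    {S : Finset ι} {f : ι → ℝ → E} (hf : ∀ j z, f j z ∈ M j) (hS : ∀ j ∉ S, f j = 0)
    {F : ℝ → E} (hF : ∀ z, F z = ∑ j ∈ S, f j z) {F' : E} {y : ℝ} (hderiv : HasDerivAt F F' y)
    (i : ι) : HasDerivAt (f i) (componentProj M i F') y := by
  have hproj : (fun z => componentProj M i (F z)) = f i := funext fun z => by
    rw [hF, h.componentProj_sum (fun j => hf j z) fun j hj => congrFun (hS j hj) z]
  exact hproj ▸ hderiv.linearMap_comp ((componentProj M i).restrictScalars ℝ)

section Bigrading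

variable {V : Type*} [NormedAddCommGroup V] [NormedSpace ℂ V] {I : ℤ → ℤ → Submodule ℂ V}

variable (I) in
def glGrading (rs : ℤ × ℤ) : Submodule ℂ (V →L[ℂ] V) :=
  glrsL I rs.1 rs.2

instance glGrading.gradedMul : SetLike.GradedMul (glGrading I) where
  mul_mem {rs rs'} {α γ} hα hγ p q v hv := by
    have h := hα _ _ _ (hγ p q v hv)
    rwa [add_assoc, add_assoc, add_comm rs'.1, add_comm rs'.2] at h

theorem iSupIndep_glGrading (hI : DirectSum.IsInternal fun pq : ℤ × ℤ => I pq.1 pq.2) :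
    iSupIndep (glGrading I) := by
  rw [iSupIndep_iff_finsetSum_eq_zero_imp_eq_zero]
  intro S α hα hsum
  suffices h : ∀ v : V, ∀ t ∈ S, α t v = 0 from fun t ht => ContinuousLinearMap.ext fun v => h v t ht
  intro v
  have hv : v ∈ ⨆ pq : ℤ × ℤ, I pq.1 pq.2 := hI.submodule_iSup_eq_top ▸ Submodule.mem_top
  refine Submodule.iSup_induction (motive := fun v => ∀ t ∈ S, α t v = 0) _ hv ?_ ?_ ?_
  · intro pq w hw
    have hshift := hI.submodule_iSupIndep.comp (add_right_injective pq)
    rw [iSupIndep_iff_finsetSum_eq_zero_imp_eq_zero] at hshift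
    refine hshift S (fun t => α t w) (fun t ht => hα t ht pq.1 pq.2 w hw) ?_
    rw [← sum_apply, hsum, zero_apply]
  · simp
  · intro w w' hw hw' t ht
    rw [map_add, hw t ht, hw' t ht, add_zero]

def laxCoeff (rs : ℤ × ℤ) : ℂ :=
  if rs.1 < 0 then -Complex.I else if rs.2 < 0 then Complex.I else 0

theorem eq_laxCoeff_smul_of_mem_glrsL {L : (V →L[ℂ] V) →ₗ[ℂ] (V →L[ℂ] V)}
    (hL₁ : ∀ r s : ℤ, 0 ≤ r → s < 0 → ∀ α ∈ glrsL I r s, L α = Complex.I • α)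
    (hL₂ : ∀ r s : ℤ, 0 ≤ r → 0 ≤ s → ∀ α ∈ glrsL I r s, L α = 0)
    (hL₃ : ∀ r s : ℤ, r < 0 → ∀ α ∈ glrsL I r s, L α = -(Complex.I • α))
    {r s : ℤ} {α : V →L[ℂ] V} (hα : α ∈ glrsL I r s) : L α = laxCoeff (r, s) • α := by
  unfold laxCoeff
  split_ifs with hr hs
  · rw [hL₃ r s hr α hα, neg_smul]
  · exact hL₁ r s (not_lt.mp hr) hs α hα
  · rw [hL₂ r s (not_lt.mp hr) (not_lt.mp hs) α hα, zero_smul]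

def nahmBidegrees : Set (ℤ × ℤ) :=
  {rs | (rs.1 = 1 ∧ rs.2 = -1) ∨ (rs.1 = 0 ∧ rs.2 = 0) ∨ (rs.1 = -1 ∧ rs.2 = 1) ∨
    (rs.1 = 0 ∧ rs.2 < 0) ∨ (rs.1 = -1 ∧ rs.2 < 1)}

theorem iSupIndep.componentProj_lax_bracket (h : iSupIndep (glGrading I))
    {L : (V →L[ℂ] V) →ₗ[ℂ] (V →L[ℂ] V)}
    (hL₁ : ∀ r s : ℤ, 0 ≤ r → s < 0 → ∀ α ∈ glrsL I r s, L α = Complex.I • α)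
    (hL₂ : ∀ r s : ℤ, 0 ≤ r → 0 ≤ s → ∀ α ∈ glrsL I r s, L α = 0)
    (hL₃ : ∀ r s : ℤ, r < 0 → ∀ α ∈ glrsL I r s, L α = -(Complex.I • α))
    {S : Finset (ℤ × ℤ)} {x : ℤ × ℤ → V →L[ℂ] V} (hx : ∀ u, x u ∈ glGrading I u)
    (hS : ∀ u ∉ S, x u = 0) (hA : ∀ u ∉ nahmBidegrees, x u = 0) :
    componentProj (glGrading I) (1, -1) ⁅∑ u ∈ S, x u, L (∑ u ∈ S, x u)⁆ =
        Complex.I • ⁅x (0, 0), x (1, -1)⁆ ∧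
      componentProj (glGrading I) (-1, 1) ⁅∑ u ∈ S, x u, L (∑ u ∈ S, x u)⁆ =
        -Complex.I • ⁅x (0, 0), x (-1, 1)⁆ ∧
      componentProj (glGrading I) (0, 0) ⁅∑ u ∈ S, x u, L (∑ u ∈ S, x u)⁆ =
        -Complex.I • ⁅x (1, -1), x (-1, 1)⁆ + Complex.I • ⁅x (-1, 1), x (1, -1)⁆ := by
  have hL : L (∑ u ∈ S, x u) = ∑ v ∈ S, laxCoeff v • x v := by
    rw [map_sum]
    exact Finset.sum_congr rfl fun v _ => eq_laxCoeff_smul_of_mem_glrsL hL₁ hL₂ hL₃ (hx v)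
  have hc : laxCoeff (1, -1) = Complex.I ∧ laxCoeff (0, 0) = 0 ∧ laxCoeff (-1, 1) = -Complex.I := by
    simp [laxCoeff]
  rw [hL]
  refine ⟨?_, ?_, ?_⟩
  · rw [h.componentProj_lie_sum hx hS hA laxCoeff (P := {((0, 0), (1, -1)), ((1, -1), (0, 0))}),
      Finset.sum_pair (by decide)]
    · simp [hc]
    · rintro ⟨⟨a, b⟩, c, d⟩
      simp only [nahmBidegrees, Finset.mem_insert, Finset.mem_singleton, Prod.mk.injEq,
        Set.mem_ofPred_eq, Prod.mk_add_mk]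
      omega
  · rw [h.componentProj_lie_sum hx hS hA laxCoeff (P := {((0, 0), (-1, 1)), ((-1, 1), (0, 0))}),
      Finset.sum_pair (by decide)]
    · simp [hc]
    · rintro ⟨⟨a, b⟩, c, d⟩
      simp only [nahmBidegrees, Finset.mem_insert, Finset.mem_singleton, Prod.mk.injEq,
        Set.mem_ofPred_eq, Prod.mk_add_mk]
      omega
  · rw [h.componentProj_lie_sum hx hS hA laxCoeff
        (P := {((1, -1), (-1, 1)), ((-1, 1), (1, -1)), ((0, 0), (0, 0))}),
      Finset.sum_insert (by decide), Finset.sum_pair (by decide)]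
    · simp [hc]
    · rintro ⟨⟨a, b⟩, c, d⟩
      simp only [nahmBidegrees, Finset.mem_insert, Finset.mem_singleton, Prod.mk.injEq,
        Set.mem_ofPred_eq, Prod.mk_add_mk]
      omega

end Bigrading

/-- **The pure-bidegree part of the Lax equation is Nahm's equation** (Corollary 6.42):
with `X⁺ = 2i β^{1,-1}`, `Z = 2i β^{0,0}`, `X⁻ = -2i β^{-1,1}` one has
`-2 dX⁺/dy = [Z, X⁺]`, `2 dX⁻/dy = [Z, X⁻]`, `-dZ/dy = [X⁺, X⁻]`. -/
theorem lax_equation_gives_nahm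
    {V : Type*} [NormedAddCommGroup V] [NormedSpace ℂ V] [FiniteDimensional ℂ V]
    (I : ℤ → ℤ → Submodule ℂ V)
    (hinternal : DirectSum.IsInternal (fun pq : ℤ × ℤ => I pq.1 pq.2))
    (L : (V →L[ℂ] V) →ₗ[ℂ] (V →L[ℂ] V))
    (hL₁ : ∀ r s : ℤ, 0 ≤ r → s < 0 → ∀ α ∈ glrsL I r s, L α = Complex.I • α)
    (hL₂ : ∀ r s : ℤ, 0 ≤ r → 0 ≤ s → ∀ α ∈ glrsL I r s, L α = 0)
    (hL₃ : ∀ r s : ℤ, r < 0 → ∀ α ∈ glrsL I r s, L α = -(Complex.I • α))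
    (a : ℝ) (β : ℝ → (V →L[ℂ] V))
    (bc : ℤ → ℤ → ℝ → (V →L[ℂ] V)) (S : Finset (ℤ × ℤ))
    (hmem : ∀ (r s : ℤ) (y : ℝ), bc r s y ∈ glrsL I r s)
    (hallowed : ∀ r s : ℤ,
      ¬((r = 1 ∧ s = -1) ∨ (r = 0 ∧ s = 0) ∨ (r = -1 ∧ s = 1) ∨
        (r = 0 ∧ s < 0) ∨ (r = -1 ∧ s < 1)) → bc r s = 0)
    (hsupp : ∀ rs : ℤ × ℤ, rs ∉ S → bc rs.1 rs.2 = 0)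
    (hβ : ∀ y : ℝ, β y = ∑ rs ∈ S, bc rs.1 rs.2 y)
    (hode : ∀ y ∈ Set.Ioi a, HasDerivAt β (-⁅β y, L (β y)⁆) y) :
    ∀ y ∈ Set.Ioi a,
      HasDerivAt (fun t => (2 * Complex.I) • bc 1 (-1) t)
        (-(2 : ℂ)⁻¹ • ⁅(2 * Complex.I) • bc 0 0 y, (2 * Complex.I) • bc 1 (-1) y⁆) y ∧
      HasDerivAt (fun t => (-(2 * Complex.I)) • bc (-1) 1 t)
        ((2 : ℂ)⁻¹ • ⁅(2 * Complex.I) • bc 0 0 y, (-(2 * Complex.I)) • bc (-1) 1 y⁆) y ∧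
      HasDerivAt (fun t => (2 * Complex.I) • bc 0 0 t)
        (-⁅(2 * Complex.I) • bc 1 (-1) y, (-(2 * Complex.I)) • bc (-1) 1 y⁆) y := by
  intro y hy
  have hind := iSupIndep_glGrading hinternal
  have hder := hind.hasDerivAt_component (f := fun u => bc u.1 u.2) (fun u => hmem u.1 u.2) hsupp
    hβ (hode y hy)
  obtain ⟨h₁, h₂, h₃⟩ := hind.componentProj_lax_bracket hL₁ hL₂ hL₃ (fun u => hmem u.1 u.2 y)
    (fun u hu => congrFun (hsupp u hu) y) (fun u hu => congrFun (hallowed u.1 u.2 hu) y)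
  rw [← hβ] at h₁ h₂ h₃
  refine ⟨((hder (1, -1)).const_smul (2 * Complex.I)).congr_deriv ?_,
    ((hder (-1, 1)).const_smul (-(2 * Complex.I))).congr_deriv ?_,
    ((hder (0, 0)).const_smul (2 * Complex.I)).congr_deriv ?_⟩ <;>
  · simp only [map_neg, h₁, h₂, h₃]
    simp only [Ring.lie_def, smul_mul_smul_comm]
    module
end
end

section
/- Let V be a finite-dimensional complex vector space, L : End(V) → End(V) a linear map, and β : (a,∞) → End(V) a C¹ function satisfying dβ/dy = −[β(y), L(β(y))]. Let h : (a,∞) → GL(V) be a C¹ solution of dh/dy = −h(y)·L(β(y)). Then: (a) there exists a fixed Ñ ∈ End(V) such that β(y) = h(y)^{−1} ∘ Ñ ∘ h(y) for all y; (b) if moreover (F_o^p)_p is a family of complex subspaces of V such that (i·β(y) + L(β(y)))(F_o^p) ⊆ F_o^p for all y and p, then there exist complex subspaces F̃^p of V with h(y)(F_o^p) = e^{iyÑ}(F̃^p) for all y and p. -/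
/-!
Put `N := h(y₀) β(y₀) h(y₀)⁻¹`. Both `h β - N h` and, for `g(y) := e^{-iyN} h(y)`, the operator
`(1 - Q) g(y) P` (with `P` a projection onto `F_o^p` and `Q` one onto `g(y₀)(F_o^p)`) satisfy a
linear ODE `F' = F C(y)` and vanish at `y₀`, hence vanish identically by uniqueness of solutions.
The first gives `β = h⁻¹ N h`; the second gives `g(y)(F_o^p) = g(y₀)(F_o^p) =: F̃^p`, and
`h(y) = e^{iyN} g(y)`.
-/

open Set

theorem eqOn_zero_of_hasDerivAt_eq_mul {R : Type*} [NormedRing R] [NormedSpace ℝ R]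
    {F C : ℝ → R} {a t₀ : ℝ} (hC : ContinuousOn C (Ioi a))
    (hF : ∀ t ∈ Ioi a, HasDerivAt F (F t * C t) t) (ht₀ : t₀ ∈ Ioi a) (hF₀ : F t₀ = 0) :
    EqOn F 0 (Ioi a) := by
  intro t ht
  obtain ⟨c, hac, hc⟩ := exists_between (lt_min (mem_Ioi.1 ht) (mem_Ioi.1 ht₀))
  obtain ⟨d, hd⟩ := exists_gt (max t t₀)
  have hcd : Icc c d ⊆ Ioi a := fun s hs => hac.trans_le hs.1
  obtain ⟨K, hK⟩ := isCompact_Icc.exists_bound_of_continuousOn (hC.mono hcd)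
  have hlip : ∀ s ∈ Ioo c d, LipschitzOnWith K.toNNReal (fun x => x * C s) univ := by
    refine fun s hs => LipschitzOnWith.of_dist_le_mul fun x _ y _ => ?_
    calc dist (x * C s) (y * C s) = ‖(x - y) * C s‖ := by rw [dist_eq_norm, sub_mul]
      _ ≤ ‖x - y‖ * K := (norm_mul_le _ _).trans
          (mul_le_mul_of_nonneg_left (hK s (Ioo_subset_Icc_self hs)) (norm_nonneg _))
      _ ≤ K.toNNReal * dist x y := by
          rw [mul_comm, dist_eq_norm]; gcongr; exact Real.le_coe_toNNReal K
  refine ODE_solution_unique_of_mem_Icc (g := fun _ => 0) hlip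
    ⟨hc.trans_le (min_le_right _ _), (le_max_right _ _).trans_lt hd⟩
    (fun s hs => (hF s (hcd hs)).continuousAt.continuousWithinAt)
    (fun s hs => hF s (hcd (Ioo_subset_Icc_self hs))) (fun _ _ => mem_univ _)
    continuousOn_const (fun s _ => by simpa only [zero_mul] using hasDerivAt_const s (0 : R))
    (fun _ _ => mem_univ _) hF₀ ⟨(hc.trans_le (min_le_left _ _)).le, (le_max_left _ _).trans hd.le⟩

theorem mul_eq_mul_of_lax_equation {R : Type*} [NormedRing R] [NormedAlgebra ℝ R]
    {β h X : ℝ → R} {N : R} {a t₀ : ℝ} (hX : ContinuousOn X (Ioi a))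
    (hβ : ∀ t ∈ Ioi a, HasDerivAt β (-⁅β t, X t⁆) t)
    (hh : ∀ t ∈ Ioi a, HasDerivAt h (-(h t * X t)) t)
    (ht₀ : t₀ ∈ Ioi a) (hN : h t₀ * β t₀ = N * h t₀) :
    ∀ t ∈ Ioi a, h t * β t = N * h t := by
  have hF : ∀ t ∈ Ioi a, HasDerivAt (fun t => h t * β t - N * h t)
      ((h t * β t - N * h t) * -X t) t := fun t ht =>
    (((hh t ht).mul (hβ t ht)).sub ((hh t ht).const_mul N)).congr_deriv (by
      rw [Ring.lie_def]; noncomm_ring)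
  intro t ht
  exact sub_eq_zero.mp (eqOn_zero_of_hasDerivAt_eq_mul hX.neg hF ht₀ (sub_eq_zero.mpr hN) ht)

theorem Submodule.exists_isProj {𝕜 E : Type*} [RCLike 𝕜] [NormedAddCommGroup E] [NormedSpace 𝕜 E]
    (W : Submodule 𝕜 E) [FiniteDimensional 𝕜 W] : ∃ P : E →L[𝕜] E, LinearMap.IsProj W P := by
  obtain ⟨f, hf⟩ := Submodule.ClosedComplemented.of_finiteDimensional W
  exact ⟨W.subtypeL.comp f, ⟨fun x => (f x).2, fun w hw => congrArg Subtype.val (hf ⟨w, hw⟩)⟩⟩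

section InvariantSubspace

variable {E : Type*} [NormedAddCommGroup E] [NormedSpace ℂ E] [FiniteDimensional ℂ E]
  {g B : ℝ → E →L[ℂ] E} {W : Submodule ℂ E} {a : ℝ}

theorem map_le_map_of_hasDerivAt_eq_mul (hB : ContinuousOn B (Ioi a))
    (hg : ∀ t ∈ Ioi a, HasDerivAt g (g t * B t) t) (hW : ∀ t ∈ Ioi a, ∀ v ∈ W, B t v ∈ W)
    {s t : ℝ} (hs : s ∈ Ioi a) (ht : t ∈ Ioi a) :
    W.map (g s : E →ₗ[ℂ] E) ≤ W.map (g t : E →ₗ[ℂ] E) := by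
  obtain ⟨P, hP⟩ := W.exists_isProj
  obtain ⟨Q, hQ⟩ := (W.map (g t : E →ₗ[ℂ] E)).exists_isProj
  have hBP : ∀ r ∈ Ioi a, P * B r * P = B r * P := fun r hr => by
    ext x; exact hP.map_id _ (hW r hr _ (hP.map_mem x))
  have hF : ∀ r ∈ Ioi a, HasDerivAt (fun r => (1 - Q) * g r * P)
      ((1 - Q) * g r * P * (B r * P)) r := fun r hr =>
    (((hg r hr).const_mul (1 - Q)).mul_const P).congr_deriv (by
      rw [mul_assoc _ P, ← mul_assoc P, hBP r hr]; simp only [mul_assoc])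
  have hFt : (1 - Q) * g t * P = 0 := by
    ext x
    simpa [sub_eq_zero] using (hQ.map_id _ ⟨P x, hP.map_mem x, rfl⟩).symm
  have hFs := eqOn_zero_of_hasDerivAt_eq_mul (hB.mul continuousOn_const) hF ht hFt hs
  rintro _ ⟨w, hw, rfl⟩
  have := congr($hFs w)
  simp [hP.map_id w hw, sub_eq_zero] at this
  exact this ▸ hQ.map_mem _

theorem map_eq_map_of_hasDerivAt_eq_mul (hB : ContinuousOn B (Ioi a))
    (hg : ∀ t ∈ Ioi a, HasDerivAt g (g t * B t) t) (hW : ∀ t ∈ Ioi a, ∀ v ∈ W, B t v ∈ W)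
    {s t : ℝ} (hs : s ∈ Ioi a) (ht : t ∈ Ioi a) :
    W.map (g s : E →ₗ[ℂ] E) = W.map (g t : E →ₗ[ℂ] E) :=
  le_antisymm (map_le_map_of_hasDerivAt_eq_mul hB hg hW hs ht)
    (map_le_map_of_hasDerivAt_eq_mul hB hg hW ht hs)

end InvariantSubspace

section ComplexBanachAlgebra

open NormedSpace

variable {A : Type*} [NormedRing A] [NormedAlgebra ℂ A] [CompleteSpace A]

theorem exp_mul_exp_neg (x : A) : exp x * exp (-x) = 1 := by
  have hx : ∀ y : A, y ∈ Metric.eball (0 : A) (expSeries ℂ A).radius := fun y =>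
    (expSeries_radius_eq_top ℂ A).symm ▸ edist_lt_top _ _
  rw [← exp_add_of_commute_of_mem_ball (Commute.refl x).neg_right (hx x) (hx (-x)),
    add_neg_cancel, exp_zero]

theorem hasDerivAt_exp_neg_I_mul_smul (N : A) (y : ℝ) :
    HasDerivAt (fun t : ℝ => exp (-((Complex.I * t) • N)))
      (exp (-((Complex.I * y) • N)) * -(Complex.I • N)) y := by
  have h : ∀ t : ℝ, -((Complex.I * t) • N) = t • -(Complex.I • N) := fun t => by
    rw [smul_neg, mul_comm, mul_smul, Complex.coe_smul]
  simp only [h]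
  exact hasDerivAt_exp_smul_const (-(Complex.I • N)) y

end ComplexBanachAlgebra

open NormedSpace Complex in
/-- **Inverting the Lax equation** (Theorem 7.1): if `β` satisfies
`dβ/dy = -[β, L β]` and `h` is a `GL(V)`-valued solution of `dh/dy = -h · L(β)`,
then (a) `β(y) = h(y)⁻¹ ∘ Ñ ∘ h(y)` for some fixed `Ñ`, and (b) if a family of
subspaces `F_o^p` is stable under `i β(y) + L(β(y))` for all `y`, then there are
subspaces `F̃^p` with `h(y)(F_o^p) = e^{i y Ñ}(F̃^p)`. -/
theorem lax_solution_is_conjugate_orbit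
    {V : Type*} [NormedAddCommGroup V] [NormedSpace ℂ V] [FiniteDimensional ℂ V]
    (L : (V →L[ℂ] V) →ₗ[ℂ] (V →L[ℂ] V)) (a : ℝ)
    (β : ℝ → (V →L[ℂ] V))
    (hβ : ∀ y ∈ Set.Ioi a, HasDerivAt β (-⁅β y, L (β y)⁆) y)
    (h : ℝ → (V ≃L[ℂ] V))
    (hh : ∀ y ∈ Set.Ioi a, HasDerivAt (fun t => ((h t : V →L[ℂ] V)))
      (-((h y : V →L[ℂ] V) * L (β y))) y) :
    ∃ N : V →L[ℂ] V,
      (∀ y ∈ Set.Ioi a,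
        β y = ((h y).symm : V →L[ℂ] V) * N * (h y : V →L[ℂ] V)) ∧
      ∀ Fo : ℤ → Submodule ℂ V,
        (∀ y ∈ Set.Ioi a, ∀ p : ℤ, ∀ v ∈ Fo p, (Complex.I • β y + L (β y)) v ∈ Fo p) →
        ∃ Ft : ℤ → Submodule ℂ V, ∀ y ∈ Set.Ioi a, ∀ p : ℤ,
          (Fo p).map ((h y : V →L[ℂ] V) : V →ₗ[ℂ] V)
            = (Ft p).map ((NormedSpace.exp ((Complex.I * (y : ℂ)) • N) : V →L[ℂ] V) : V →ₗ[ℂ] V) := by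
  have hsymm_mul (y : ℝ) : ((h y).symm : V →L[ℂ] V) * h y = 1 := by ext; simp
  have hβc : ContinuousOn β (Ioi a) := fun t ht => (hβ t ht).continuousAt.continuousWithinAt
  have hLβ : ContinuousOn (fun t => L (β t)) (Ioi a) :=
    L.continuous_of_finiteDimensional.comp_continuousOn hβc
  have ha₁ : a + 1 ∈ Ioi a := lt_add_one a
  set N : V →L[ℂ] V := h (a + 1) * β (a + 1) * (h (a + 1)).symm
  have hN : ∀ y ∈ Ioi a, (h y : V →L[ℂ] V) * β y = N * h y :=
    mul_eq_mul_of_lax_equation hLβ hβ hh ha₁ (by simp only [N, mul_assoc, hsymm_mul, mul_one])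
  refine ⟨N, fun y hy => by rw [mul_assoc, ← hN y hy, ← mul_assoc, hsymm_mul, one_mul], ?_⟩
  intro Fo hFo
  set g : ℝ → V →L[ℂ] V := fun t => exp (-((I * t) • N)) * h t
  have hg : ∀ t ∈ Ioi a, HasDerivAt g (g t * -(I • β t + L (β t))) t := fun t ht =>
    ((hasDerivAt_exp_neg_I_mul_smul N t).mul (hh t ht)).congr_deriv (by
      have hI : (I • N) * h t = h t * (I • β t) := by rw [smul_mul_assoc, ← hN t ht, mul_smul_comm]
      simp only [g, neg_mul, mul_neg, mul_add, neg_add, mul_assoc, hI])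
  have hB : ContinuousOn (fun t => -(I • β t + L (β t))) (Ioi a) :=
    ((hβc.const_smul I).add hLβ).neg
  refine ⟨fun p => (Fo p).map (g (a + 1) : V →ₗ[ℂ] V), fun y hy p => ?_⟩
  have hhy : (h y : V →L[ℂ] V) = exp ((I * y) • N) * g y := by
    simp only [g, ← mul_assoc, exp_mul_exp_neg, one_mul]
  dsimp only
  rw [← map_eq_map_of_hasDerivAt_eq_mul hB hg (fun t ht v hv => neg_mem (hFo t ht p v hv)) hy ha₁,
    ← Submodule.map_comp, hhy]
  rfl
end

section
/- Let E be a finite-dimensional complex normed vector space, B : E × E → E a bilinear map, a > 0, and (f_n)_{n≥0} a sequence in E such that Σ_{n≥0} ‖f_n‖ ρ^n < ∞ for every ρ < a^{−1/2}, so that f(y) = Σ_{n≥0} f_n y^{−1−n/2} converges for y > a. If −8·f'(y) = B(f(y), f(y)) for all y > a, then the coefficients satisfy (8 + 4n)·f_n = Σ_{k=0}^n B(f_k, f_{n−k}) for every n ≥ 0. -/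
/-!
In the variable `x = y^{-1/2}` the series reads `f (x⁻²) = x² g x` with `g x = ∑ cₙ xⁿ`, a power
series converging for `|x| < a^{-1/2}`. Differentiating this identity turns `-8 f' = B(f, f)` into
`B(g, g) = 8 g + 4 x g'` on `(0, a^{-1/2})`. Termwise differentiation expands the right side as
`∑ (8 + 4n) cₙ xⁿ`, the Cauchy product expands the left side as `∑ (∑ₖ B(cₖ, cₙ₋ₖ)) xⁿ`, and a
power series vanishing on an interval `(0, ρ)` has zero coefficients, since a nonzero one has
no zeros in a punctured neighbourhood of `0`.
-/

open Filter Topology Set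

section PowerSeries

variable {F : Type*} [NormedAddCommGroup F]

theorem summable_natCast_mul_norm_mul_pow {c : ℕ → F} {ρ R : ℝ} (hρ : 0 ≤ ρ) (hρR : ρ < R)
    (hR : Summable fun n => ‖c n‖ * R ^ n) : Summable fun n : ℕ => n * ‖c n‖ * ρ ^ n := by
  have hR0 : 0 < R := hρ.trans_lt hρR
  obtain ⟨M, hM⟩ := hR.tendsto_atTop_zero.bddAbove_range
  have ht : ‖ρ / R‖ < 1 := by
    rwa [Real.norm_eq_abs, abs_of_nonneg (by positivity), div_lt_one hR0]
  refine .of_nonneg_of_le (fun n => by positivity) (fun n => ?_)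
    ((summable_pow_mul_geometric_of_norm_lt_one 1 ht).mul_left M)
  calc (n : ℝ) * ‖c n‖ * ρ ^ n = (‖c n‖ * R ^ n) * (n ^ 1 * (ρ / R) ^ n) := by
        rw [div_pow]; field_simp
    _ ≤ M * (n ^ 1 * (ρ / R) ^ n) := by gcongr; exact hM ⟨n, rfl⟩

variable [NormedSpace ℝ F]

theorem summable_norm_pow_smul {c : ℕ → F} {R x : ℝ}
    (hR : Summable fun n => ‖c n‖ * R ^ n) (hx : |x| ≤ R) :
    Summable fun n : ℕ => ‖x ^ n • c n‖ :=
  .of_nonneg_of_le (fun n => norm_nonneg _) (fun n => by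
    rw [norm_smul, norm_pow, Real.norm_eq_abs, mul_comm]; gcongr) hR

theorem summable_norm_natCast_mul_pow_sub_one_smul {c : ℕ → F} {R x : ℝ}
    (hR : Summable fun n => ‖c n‖ * R ^ n) (hx : |x| < R) :
    Summable fun n : ℕ => ‖(n * x ^ (n - 1)) • c n‖ := by
  obtain ⟨ρ, hxρ, hρR⟩ := exists_between hx
  have hρ : 0 < ρ := (abs_nonneg x).trans_lt hxρ
  refine .of_nonneg_of_le (fun n => norm_nonneg _) (fun n => ?_)
    ((summable_natCast_mul_norm_mul_pow hρ.le hρR hR).mul_left ρ⁻¹)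
  calc ‖(n * x ^ (n - 1)) • c n‖ = n * |x| ^ (n - 1) * ‖c n‖ := by
        simp only [norm_smul, norm_mul, norm_pow, Real.norm_eq_abs, Nat.abs_cast]
    _ ≤ n * ρ ^ (n - 1) * ‖c n‖ := by gcongr
    _ = ρ⁻¹ * (n * ‖c n‖ * ρ ^ n) := by
        rcases n with _ | n
        · simp
        · rw [Nat.add_sub_cancel, pow_succ]; field_simp

variable [CompleteSpace F]

theorem hasDerivAt_tsum_pow_smul {c : ℕ → F} {R x : ℝ}
    (hR : Summable fun n => ‖c n‖ * R ^ n) (hx : |x| < R) :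
    HasDerivAt (fun t => ∑' n, t ^ n • c n) (∑' n : ℕ, ((n : ℝ) * x ^ (n - 1)) • c n) x := by
  obtain ⟨ρ, hxρ, hρR⟩ := exists_between hx
  have hρ0 : 0 < ρ := (abs_nonneg x).trans_lt hxρ
  have hρ : |ρ| < R := by rwa [abs_of_pos hρ0]
  have hball : x ∈ Metric.ball (0 : ℝ) ρ := by rwa [mem_ball_zero_iff, Real.norm_eq_abs]
  refine hasDerivAt_tsum_of_isPreconnected (g' := fun (n : ℕ) t => ((n : ℝ) * t ^ (n - 1)) • c n)
    (summable_norm_natCast_mul_pow_sub_one_smul hR hρ)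
    Metric.isOpen_ball (convex_ball 0 ρ).isPreconnected
    (fun (n : ℕ) t _ => (hasDerivAt_pow n t).smul_const (c n)) (fun n t ht => ?_) hball
    (summable_norm_pow_smul hR hx.le).of_norm hball
  rw [mem_ball_zero_iff, Real.norm_eq_abs] at ht
  simp only [norm_smul, norm_mul, norm_pow, Real.norm_eq_abs, Nat.abs_cast, abs_of_pos hρ0]
  gcongr

theorem hasSum_pow_smul_add_natCast_mul_smul {c : ℕ → F} {R x : ℝ}
    (hR : Summable fun n => ‖c n‖ * R ^ n) (hx : |x| < R) (α β : ℝ) :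
    HasSum (fun n : ℕ => x ^ n • (α + β * n) • c n)
      (α • ∑' n, x ^ n • c n + (β * x) • ∑' n : ℕ, ((n : ℝ) * x ^ (n - 1)) • c n) := by
  have hg := (summable_norm_pow_smul hR hx.le).of_norm.hasSum
  have hg' := (summable_norm_natCast_mul_pow_sub_one_smul hR hx).of_norm.hasSum
  convert (hg.const_smul α).add (hg'.const_smul (β * x)) using 1
  funext n
  simp only [smul_smul, ← add_smul]
  congr 1
  rcases n with _ | n
  · simp
  · simp only [Nat.add_sub_cancel, pow_succ]
    push_cast
    ring

theorem eq_zero_of_hasSum_pow_smul_zero_on_Ioo {d : ℕ → F} {ρ : ℝ} (hρ : 0 < ρ)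
    (h : ∀ x ∈ Ioo 0 ρ, HasSum (fun n => x ^ n • d n) 0) : d = 0 := by
  let p : FormalMultilinearSeries ℝ ℝ F :=
    fun n => ContinuousMultilinearMap.mkPiRing ℝ (Fin n) (d n)
  have hp : ∀ n x, p n (fun _ => x) = x ^ n • d n := by simp [p]
  have hrad : 0 < p.radius := by
    obtain ⟨ρ₀, hρ₀⟩ : ∃ ρ₀ : NNReal, (ρ₀ : ℝ) ∈ Ioo 0 ρ :=
      ⟨(ρ / 2).toNNReal, by rw [Real.coe_toNNReal _ (by positivity)]; constructor <;> linarith⟩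
    refine lt_of_lt_of_le (ENNReal.coe_pos.2 (NNReal.coe_pos.1 hρ₀.1))
      (p.le_radius_of_tendsto (l := 0) ?_)
    refine (tendsto_zero_iff_norm_tendsto_zero.1 (h _ hρ₀).summable.tendsto_atTop_zero).congr
      fun n => ?_
    rw [norm_smul, ContinuousMultilinearMap.norm_mkPiRing, norm_pow, NNReal.norm_eq, mul_comm]
  have hp0 : p = 0 := by
    by_contra hne
    obtain ⟨x, hx0, hx⟩ :=
      ((((p.hasFPowerSeriesOnBall hrad).hasFPowerSeriesAt.locally_ne_zero hne).filter_mono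
        (nhdsGT_le_nhdsNE 0)).and (Ioo_mem_nhdsGT hρ)).exists
    exact hx0 (by simpa [FormalMultilinearSeries.sum, hp] using (h x hx).tsum_eq)
  funext n
  simpa [hp0] using (hp n 1).symm

end PowerSeries

theorem ContinuousLinearMap.hasSum_sum_range_of_summable_norm {𝕜 E F G : Type*}
    [NontriviallyNormedField 𝕜] [NormedAddCommGroup E] [NormedSpace 𝕜 E] [NormedAddCommGroup F]
    [NormedSpace 𝕜 F] [NormedAddCommGroup G] [NormedSpace 𝕜 G] [CompleteSpace G]
    (L : E →L[𝕜] F →L[𝕜] G) {u : ℕ → E} {v : ℕ → F} {s : E} {t : F}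
    (hu : HasSum u s) (hv : HasSum v t) (hu' : Summable fun n => ‖u n‖)
    (hv' : Summable fun n => ‖v n‖) :
    HasSum (fun n => ∑ k ∈ Finset.range (n + 1), L (u k) (v (n - k))) (L s t) := by
  set w : ℕ × ℕ → G := fun p => L (u p.1) (v p.2)
  have hw : Summable w := by
    refine .of_norm_bounded ((hu'.mul_of_nonneg hv' (fun _ => norm_nonneg _)
      (fun _ => norm_nonneg _)).mul_left ‖L‖) fun p => ?_
    rw [← mul_assoc]
    exact L.le_opNorm₂ _ _
  have hst : HasSum w (L s t) := by
    have h := hw.hasSum.prod_fiberwise fun k => (L (u k)).hasSum hv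
    convert hw.hasSum
    exact ((L.flip t).hasSum hu).unique h
  have hsigma := (Finset.HasAntidiagonal.sigmaAntidiagonalEquivProd.hasSum_iff.2 hst).sigma
    fun n => hasSum_fintype _
  simp only [← Finset.Nat.sum_antidiagonal_eq_sum_range_succ fun k l => L (u k) (v l)]
  convert hsigma using 1
  funext n
  exact (Finset.sum_coe_sort _ _).symm

section ComplexBilinear

variable {E : Type*} [NormedAddCommGroup E] [NormedSpace ℂ E]

theorem LinearMap.hasSum_pow_smul_sum_range [FiniteDimensional ℂ E] (B : E →ₗ[ℂ] E →ₗ[ℂ] E)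
    {u v : ℕ → E} {x : ℝ} (hu : Summable fun n => ‖x ^ n • u n‖)
    (hv : Summable fun n => ‖x ^ n • v n‖) :
    HasSum (fun n : ℕ => x ^ n • ∑ k ∈ Finset.range (n + 1), B (u k) (v (n - k)))
      (B (∑' n, x ^ n • u n) (∑' n, x ^ n • v n)) := by
  let L : E →L[ℂ] E →L[ℂ] E := LinearMap.toContinuousLinearMap
    ((LinearMap.toContinuousLinearMap : (E →ₗ[ℂ] E) ≃ₗ[ℂ] (E →L[ℂ] E)).toLinearMap ∘ₗ B)
  show HasSum _ (L (∑' n, x ^ n • u n) (∑' n, x ^ n • v n))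
  convert L.hasSum_sum_range_of_summable_norm hu.of_norm.hasSum hv.of_norm.hasSum hu hv using 1
  funext n
  rw [Finset.smul_sum]
  refine Finset.sum_congr rfl fun k hk => ?_
  change _ = B (x ^ k • u k) (x ^ (n - k) • v (n - k))
  simp only [LinearMap.map_smul_of_tower, LinearMap.smul_apply, smul_smul, ← pow_add,
    Nat.add_sub_cancel' (Finset.mem_range_succ_iff.1 hk)]

theorem LinearMap.apply_apply_eq_of_hasDerivAt_comp_inv_sq (B : E →ₗ[ℂ] E →ₗ[ℂ] E)
    {f g : ℝ → E} {x : ℝ} {g' : E} (hx : 0 < x)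
    (hfg : (fun t => f (t ^ 2)⁻¹) =ᶠ[𝓝 x] fun t => t ^ 2 • g t)
    (hf : HasDerivAt f (-(8 : ℂ)⁻¹ • B (f (x ^ 2)⁻¹) (f (x ^ 2)⁻¹)) (x ^ 2)⁻¹)
    (hg : HasDerivAt g g' x) :
    B (g x) (g x) = (8 : ℝ) • g x + (4 * x) • g' := by
  have hcomp := hf.scomp x ((hasDerivAt_pow 2 x).inv (by positivity))
  have hprod := ((hasDerivAt_pow 2 x).smul hg).congr_of_eventuallyEq hfg
  have h := hcomp.unique hprod
  simp only [hfg.self_of_nhds, LinearMap.map_smul_of_tower, LinearMap.smul_apply] at h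
  rw [show -(8 : ℂ)⁻¹ = ((-(8 : ℝ)⁻¹ : ℝ) : ℂ) by push_cast; rfl, Complex.coe_smul] at h
  simp only [smul_smul] at h
  have h' : (x / 4) • B (g x) (g x) = x ^ 2 • g' + (2 * x) • g x := by
    convert h using 2
    · field_simp
      ring
    · norm_num
  calc B (g x) (g x) = (4 / x) • (x / 4) • B (g x) (g x) := by
        rw [smul_smul, div_mul_div_cancel₀ hx.ne', div_self four_ne_zero, one_smul]
    _ = (8 : ℝ) • g x + (4 * x) • g' := by
        rw [h']
        match_scalars <;> field_simp
        norm_num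

end ComplexBilinear

theorem Real.rpow_inv_sq_neg_one_sub_div_two {x : ℝ} (hx : 0 ≤ x) (n : ℕ) :
    Real.rpow (x ^ 2)⁻¹ (-1 - n / 2) = x ^ (n + 2) := by
  rw [Real.rpow_eq_pow, Real.inv_rpow (by positivity), ← Real.rpow_natCast_mul hx,
    ← Real.rpow_neg hx, show -((2 : ℕ) * (-1 - n / 2 : ℝ)) = ((n + 2 : ℕ) : ℝ) by push_cast; ring,
    Real.rpow_natCast]

/-- **Recursion for the coefficients of a series solution** (cf. (7.8)–(7.9)):
if `f(y) = Σ_{n≥0} c_n y^{-1-n/2}` converges for `y > a` and satisfies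
`-8 f'(y) = B(f(y), f(y))`, then `(8 + 4n) c_n = Σ_{k=0}^n B(c_k, c_{n-k})`. -/
theorem series_solution_recursion
    {E : Type*} [NormedAddCommGroup E] [NormedSpace ℂ E] [FiniteDimensional ℂ E]
    (B : E →ₗ[ℂ] E →ₗ[ℂ] E) (a : ℝ) (ha : 0 < a)
    (c : ℕ → E)
    (hconv : ∀ ρ : ℝ, 0 ≤ ρ → ρ < (Real.sqrt a)⁻¹ →
      Summable fun n : ℕ => ‖c n‖ * ρ ^ n)
    (f : ℝ → E)
    (hf : ∀ y : ℝ, a < y → f y = ∑' n : ℕ, Real.rpow y (-1 - (n : ℝ) / 2) • c n)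
    (hode : ∀ y : ℝ, a < y → HasDerivAt f (-(8 : ℂ)⁻¹ • B (f y) (f y)) y) :
    ∀ n : ℕ, ((8 : ℂ) + 4 * (n : ℂ)) • c n
      = ∑ k ∈ Finset.range (n + 1), B (c k) (c (n - k)) := by
  set r := (Real.sqrt a)⁻¹
  have hr : 0 < r := inv_pos.2 (Real.sqrt_pos.2 ha)
  have hay : ∀ x ∈ Ioo 0 r, a < (x ^ 2)⁻¹ := by
    rintro x ⟨hx0, hxr⟩
    rw [lt_inv_comm₀ ha (by positivity), ← Real.sq_sqrt ha.le, ← inv_pow]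
    gcongr
  have hrad : ∀ x ∈ Ioo 0 r, ∃ R, Summable (fun n => ‖c n‖ * R ^ n) ∧ |x| < R := by
    rintro x ⟨hx0, hxr⟩
    obtain ⟨R, hxR, hRr⟩ := exists_between hxr
    exact ⟨R, hconv R (hx0.trans hxR).le hRr, by rwa [abs_of_pos hx0]⟩
  have hfg : ∀ x ∈ Ioo 0 r, f (x ^ 2)⁻¹ = x ^ 2 • ∑' n, x ^ n • c n := fun x hx => by
    simp only [hf _ (hay x hx), Real.rpow_inv_sq_neg_one_sub_div_two hx.1.le,
      ← tsum_const_smul'', smul_smul, pow_add, mul_comm]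
  have hd : (fun n : ℕ =>
      ((8 : ℝ) + 4 * n) • c n - ∑ k ∈ Finset.range (n + 1), B (c k) (c (n - k))) = 0 := by
    refine eq_zero_of_hasSum_pow_smul_zero_on_Ioo hr fun x hx => ?_
    obtain ⟨R, hR, hxR⟩ := hrad x hx
    have hode' := B.apply_apply_eq_of_hasDerivAt_comp_inv_sq
      (g := fun t => ∑' n, t ^ n • c n) hx.1
      (eventually_of_mem (isOpen_Ioo.mem_nhds hx) hfg) (hode _ (hay x hx))
      (hasDerivAt_tsum_pow_smul hR hxR)
    beta_reduce at hode'
    have hcauchy := B.hasSum_pow_smul_sum_range (summable_norm_pow_smul hR hxR.le)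
      (summable_norm_pow_smul hR hxR.le)
    simpa only [smul_sub, sub_self, ← hode'] using
      (hasSum_pow_smul_add_natCast_mul_smul hR hxR 8 4).sub hcauchy
  intro n
  rw [show (8 : ℂ) + 4 * n = ((8 + 4 * n : ℝ) : ℂ) by push_cast; rfl, Complex.coe_smul]
  exact sub_eq_zero.1 (congrFun hd n)
end

section
/- Let V be a finite-dimensional complex vector space, a > 0, (B_m)_{m≥2} a sequence in End(V) with Σ_{m≥2} B_m y^{−m} absolutely convergent for y > a, and g : (a,∞) → GL(V) a C¹ function with g(y)^{−1}·g'(y) = Σ_{m≥2} B_m y^{−m}, admitting for large y the convergent expansions g(y) = g(∞)·(1 + Σ_{k≥1} g_k y^{−k}) and g(y)^{−1} = (1 + Σ_{k≥1} f_k y^{−k})·g(∞)^{−1}. Suppose N_0 ∈ End(V) satisfies (ad N_0)^m B_m = 0 for every m ≥ 2. Then (ad N_0)^{k+1} g_k = 0 and (ad N_0)^{k+1} f_k = 0 for every k ≥ 1. -/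
/-!
Put `z = 1/y`. With `g_0 = f_0 = 1`, the functions `u(z) = Σ g_k z^k = g(∞)⁻¹ g(1/z)`,
`v(z) = Σ f_k z^k = g(1/z)⁻¹ g(∞)` and `β(z) = Σ B_{m+2} z^m` are absolutely convergent power
series on some interval `(0, ρ]`; the differential equation becomes `u' = -u β` and `g⁻¹ g = 1`
becomes `v u = 1`. A power series vanishing on `(0, ρ)` is zero, so comparing coefficients gives
`(k + 1) g_{k+1} = -Σ_{i+j=k} g_i B_{j+2}` and `f_{k+1} = -Σ_{i+j=k} f_i g_{j+1}`.
By the Leibniz rule for `ad N₀`, a product `x y` with `(ad N₀)^p x = 0` and `(ad N₀)^q y = 0` is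
killed by `(ad N₀)^(p+q-1)`, and strong induction on `k` gives `(ad N₀)^(k+1) g_k = 0` and then
`(ad N₀)^(k+1) f_k = 0`.
-/

noncomputable section

attribute [local instance 100] LieRing.ofAssociativeRing

open Finset Filter Topology Set

namespace ExpansionKernel

def cauchyProduct {A : Type*} [Mul A] [AddCommMonoid A] (a b : ℕ → A) (n : ℕ) : A :=
  ∑ ij ∈ antidiagonal n, a ij.1 * b ij.2

section CauchyProduct

variable {A : Type*} [Mul A] [AddCommMonoid A] (a b : ℕ → A)

lemma cauchyProduct_zero : cauchyProduct a b 0 = a 0 * b 0 := by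
  simp [cauchyProduct]

lemma cauchyProduct_succ (n : ℕ) :
    cauchyProduct a b (n + 1) = a (n + 1) * b 0 + cauchyProduct a (fun j => b (j + 1)) n :=
  Nat.sum_antidiagonal_succ'

end CauchyProduct

section Adjoint

open LieAlgebra

variable {R A : Type*} [CommRing R] [Ring A] [Algebra R A]

lemma ad_mul (N x y : A) : ad R A N (x * y) = ad R A N x * y + x * ad R A N y := by
  simp only [ad_apply, Ring.lie_def]
  noncomm_ring

lemma ad_one (N : A) : ad R A N 1 = 0 := by
  simp [Ring.lie_def]

theorem ad_pow_mul (N x y : A) (n : ℕ) :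
    (ad R A N ^ n) (x * y) =
      ∑ ij ∈ antidiagonal n, n.choose ij.1 • ((ad R A N ^ ij.1) x * (ad R A N ^ ij.2) y) := by
  induction n with
  | zero => simp
  | succ n ih =>
    rw [sum_antidiagonal_choose_succ_nsmul (fun i j => (ad R A N ^ i) x * (ad R A N ^ j) y) n]
    simp only [pow_succ', Module.End.mul_apply, ih, map_sum, map_nsmul, ad_mul, nsmul_add,
      sum_add_distrib]
    rw [add_comm, add_left_cancel_iff, sum_congr rfl]
    rintro ⟨i, j⟩ hij
    rw [Nat.choose_symm_of_eq_add (mem_antidiagonal.1 hij).symm]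

theorem ad_pow_mul_eq_zero {N x y : A} {p q n : ℕ} (hn : p + q ≤ n + 1)
    (hx : (ad R A N ^ p) x = 0) (hy : (ad R A N ^ q) y = 0) : (ad R A N ^ n) (x * y) = 0 := by
  rw [ad_pow_mul]
  refine sum_eq_zero fun ij hij => ?_
  obtain hi | hj : p ≤ ij.1 ∨ q ≤ ij.2 := by
    have := mem_antidiagonal.1 hij
    omega
  · rw [Module.End.pow_map_zero_of_le hi hx, zero_mul, smul_zero]
  · rw [Module.End.pow_map_zero_of_le hj hy, mul_zero, smul_zero]

theorem ad_pow_cauchyProduct_eq_zero {N : A} {a b : ℕ → A} {n : ℕ}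
    (ha : ∀ i ≤ n, (ad R A N ^ (i + 1)) (a i) = 0) (hb : ∀ j ≤ n, (ad R A N ^ (j + 2)) (b j) = 0) :
    (ad R A N ^ (n + 2)) (cauchyProduct a b n) = 0 := by
  rw [cauchyProduct, map_sum]
  refine sum_eq_zero fun ij hij => ?_
  have hn := mem_antidiagonal.1 hij
  exact ad_pow_mul_eq_zero (by omega) (ha ij.1 (by omega)) (hb ij.2 (by omega))

theorem ad_pow_succ_eq_zero_of_cauchyProduct_eq_single {N : A} {f u : ℕ → A} (hu0 : u 0 = 1)
    (hu : ∀ k, (ad R A N ^ (k + 1)) (u k) = 0) (hfu : cauchyProduct f u = Pi.single 0 1) :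
    ∀ k, (ad R A N ^ (k + 1)) (f k) = 0 := by
  intro k
  induction k using Nat.strong_induction_on with
  | _ k ih =>
    rcases k with _ | n
    · have h := congrFun hfu 0
      rw [cauchyProduct_zero, hu0, mul_one, Pi.single_eq_same] at h
      rw [h, zero_add, pow_one, ad_one]
    · have h := congrFun hfu (n + 1)
      rw [cauchyProduct_succ, hu0, mul_one, Pi.single_eq_of_ne n.succ_ne_zero,
        add_eq_zero_iff_eq_neg] at h
      rw [h, map_neg, ad_pow_cauchyProduct_eq_zero (fun i hi => ih i (by omega)) (fun j _ => hu _),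
        neg_zero]

variable {K : Type*} [Field K] [CharZero K] [Algebra K A]

theorem ad_pow_succ_eq_zero_of_nsmul_eq_neg_cauchyProduct {N : A} {u c : ℕ → A} (hu0 : u 0 = 1)
    (hc : ∀ m, (ad K A N ^ (m + 2)) (c m) = 0)
    (hrel : ∀ n, (n + 1) • u (n + 1) = -cauchyProduct u c n) :
    ∀ k, (ad K A N ^ (k + 1)) (u k) = 0 := by
  intro k
  induction k using Nat.strong_induction_on with
  | _ k ih =>
    rcases k with _ | n
    · rw [hu0, zero_add, pow_one, ad_one]
    · have h := congrArg (ad K A N ^ (n + 2)) (hrel n)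
      rw [map_neg, ad_pow_cauchyProduct_eq_zero (fun i hi => ih i (by omega)) (fun j _ => hc j),
        neg_zero, map_nsmul, ← Nat.cast_smul_eq_nsmul K] at h
      exact (smul_eq_zero.mp h).resolve_left (Nat.cast_ne_zero.mpr n.succ_ne_zero)

end Adjoint

section PowerSeries

variable {E : Type*} [NormedAddCommGroup E] [NormedSpace ℝ E] {c d : ℕ → E} {ρ z : ℝ}

lemma norm_pow_smul_le_of_abs_le (hz : |z| ≤ ρ) (k : ℕ) : ‖z ^ k • c k‖ ≤ ‖ρ ^ k • c k‖ := by
  rw [norm_smul, norm_smul, norm_pow, norm_pow, Real.norm_eq_abs, Real.norm_eq_abs,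
    abs_of_nonneg ((abs_nonneg z).trans hz)]
  gcongr

lemma summable_norm_pow_smul_of_abs_le (hc : Summable fun k => ‖ρ ^ k • c k‖) (hz : |z| ≤ ρ) :
    Summable fun k => ‖z ^ k • c k‖ :=
  hc.of_nonneg_of_le (fun _ => norm_nonneg _) (norm_pow_smul_le_of_abs_le hz)

lemma summable_norm_pow_smul_succ (hρ : 0 < ρ) (hc : Summable fun k => ‖ρ ^ k • c k‖) :
    Summable fun k => ‖ρ ^ k • c (k + 1)‖ := by
  refine ((summable_nat_add_iff 1).mpr hc).mul_left ρ⁻¹ |>.congr fun k => ?_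
  rw [pow_succ', mul_smul, norm_smul ρ, Real.norm_of_nonneg hρ.le, inv_mul_cancel_left₀ hρ.ne']

lemma summable_norm_pow_smul_nsmul_succ (hc : Summable fun k => ‖ρ ^ k • c k‖) (hz : |z| < ρ) :
    Summable fun k => ‖z ^ k • ((k + 1) • c (k + 1))‖ := by
  have hρ : 0 < ρ := (abs_nonneg z).trans_lt hz
  set q := |z| / ρ
  have hq : ‖q‖ < 1 := by
    rwa [Real.norm_of_nonneg (by positivity), div_lt_one hρ]
  have hM (k : ℕ) : ‖ρ ^ (k + 1) • c (k + 1)‖ ≤ ∑' k, ‖ρ ^ k • c k‖ :=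
    hc.le_tsum (k + 1) fun _ _ => norm_nonneg _
  refine ((summable_choose_mul_geometric_of_norm_lt_one 1 hq).mul_left
    ((∑' k, ‖ρ ^ k • c k‖) / ρ)).of_nonneg_of_le (fun _ => norm_nonneg _) fun k => ?_
  calc ‖z ^ k • ((k + 1) • c (k + 1))‖
      = ‖ρ ^ (k + 1) • c (k + 1)‖ / ρ * (((k + 1).choose 1 : ℕ) * q ^ k) := by
        simp only [norm_smul, RCLike.norm_nsmul ℝ, nsmul_eq_mul, norm_pow, Real.norm_eq_abs,
          abs_of_pos hρ, Nat.choose_one_right, q, div_pow]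
        field_simp
        ring
    _ ≤ _ := by gcongr; exact hM k

variable [CompleteSpace E]

lemma tsum_pow_smul_eq_add (hc : Summable fun k => ‖z ^ k • c k‖) :
    ∑' k, z ^ k • c k = c 0 + z • ∑' k, z ^ k • c (k + 1) := by
  rw [hc.of_norm.tsum_eq_zero_add, ← tsum_const_smul'']
  simp only [pow_zero, one_smul, pow_succ', mul_smul]

lemma tendsto_tsum_pow_smul_nhdsGT_zero (hρ : 0 < ρ) (hc : Summable fun k => ‖ρ ^ k • c k‖) :
    Tendsto (fun z : ℝ => ∑' k, z ^ k • c k) (𝓝[>] 0) (𝓝 (c 0)) := by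
  have hlim : Tendsto (fun z : ℝ => ∑' k, z ^ k • c k) (𝓝[>] 0)
      (𝓝 (∑' k, (0 : ℝ) ^ k • c k)) := by
    refine tendsto_tsum_of_dominated_convergence hc (fun k => ?_) ?_
    · exact ((continuous_pow k).smul continuous_const).continuousAt.tendsto.mono_left
        nhdsWithin_le_nhds
    · filter_upwards [Ioo_mem_nhdsGT hρ] with z hz
      exact norm_pow_smul_le_of_abs_le ((abs_of_pos hz.1).trans_le hz.2.le)
  rwa [tsum_eq_single 0 fun k hk => by rw [zero_pow hk, zero_smul], pow_zero, one_smul] at hlim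

lemma coeff_zero_eq_of_tsum_pow_smul_eq (hρ : 0 < ρ) (hc : Summable fun k => ‖ρ ^ k • c k‖)
    (hd : Summable fun k => ‖ρ ^ k • d k‖)
    (h : ∀ z ∈ Ioo 0 ρ, ∑' k, z ^ k • c k = ∑' k, z ^ k • d k) : c 0 = d 0 := by
  refine tendsto_nhds_unique (tendsto_tsum_pow_smul_nhdsGT_zero hρ hc) ?_
  refine (tendsto_tsum_pow_smul_nhdsGT_zero hρ hd).congr' ?_
  filter_upwards [Ioo_mem_nhdsGT hρ] with z hz
  exact (h z hz).symm

theorem eq_of_tsum_pow_smul_eq (hρ : 0 < ρ) (hc : Summable fun k => ‖ρ ^ k • c k‖)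
    (hd : Summable fun k => ‖ρ ^ k • d k‖)
    (h : ∀ z ∈ Ioo 0 ρ, ∑' k, z ^ k • c k = ∑' k, z ^ k • d k) : c = d := by
  funext n
  induction n generalizing c d with
  | zero => exact coeff_zero_eq_of_tsum_pow_smul_eq hρ hc hd h
  | succ n ih =>
    refine ih (summable_norm_pow_smul_succ hρ hc) (summable_norm_pow_smul_succ hρ hd)
      fun z hz => ?_
    have hz' : |z| ≤ ρ := (abs_of_pos hz.1).trans_le hz.2.le
    have h_eq := h z hz
    rw [tsum_pow_smul_eq_add (summable_norm_pow_smul_of_abs_le hc hz'),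
      tsum_pow_smul_eq_add (summable_norm_pow_smul_of_abs_le hd hz'),
      coeff_zero_eq_of_tsum_pow_smul_eq hρ hc hd h, add_right_inj] at h_eq
    exact smul_right_injective E hz.1.ne' h_eq

theorem hasDerivAt_tsum_pow_smul (hc : Summable fun k => ‖ρ ^ k • c k‖) (hz : |z| < ρ) :
    HasDerivAt (fun w => ∑' k, w ^ k • c k) (∑' k, z ^ k • ((k + 1) • c (k + 1))) z := by
  obtain ⟨σ, hzσ, hσρ⟩ := exists_between hz
  have hσ : 0 ≤ σ := (abs_nonneg z).trans hzσ.le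
  have hbound : Summable fun k : ℕ => k * σ ^ (k - 1) * ‖c k‖ := by
    refine (summable_nat_add_iff 1).mp <|
      (summable_norm_pow_smul_nsmul_succ hc ((abs_of_nonneg hσ).trans_lt hσρ)).congr fun k => ?_
    rw [norm_smul, RCLike.norm_nsmul ℝ, nsmul_eq_mul, Real.norm_of_nonneg (by positivity)]
    push_cast
    ring
  have hmem : z ∈ Ioo (-σ) σ := abs_lt.mp hzσ
  refine (hasDerivAt_tsum_of_isPreconnected (t := Ioo (-σ) σ) (y₀ := z)
    (g := fun k w => w ^ k • c k) (g' := fun k w => ((k : ℝ) * w ^ (k - 1)) • c k)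
    hbound isOpen_Ioo isPreconnected_Ioo (fun k w _ => (hasDerivAt_pow k w).smul_const (c k))
    (fun k w hw => ?_) hmem (summable_norm_pow_smul_of_abs_le hc hz.le).of_norm hmem).congr_deriv ?_
  · have hw' : |w| ≤ σ := abs_le.mpr ⟨hw.1.le, hw.2.le⟩
    rw [norm_smul, norm_mul, norm_pow, Real.norm_natCast, Real.norm_eq_abs]
    gcongr
  · have hterm (k : ℕ) :
        (((k + 1 : ℕ) : ℝ) * z ^ (k + 1 - 1)) • c (k + 1) = z ^ k • ((k + 1) • c (k + 1)) := by
      rw [Nat.add_sub_cancel, mul_comm, mul_smul, Nat.cast_smul_eq_nsmul]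
    rw [tsum_eq_zero_add' (f := fun k : ℕ => ((k : ℝ) * z ^ (k - 1)) • c k)
      ((summable_norm_pow_smul_nsmul_succ hc hz).of_norm.congr fun k => (hterm k).symm)]
    simp only [Nat.cast_zero, zero_mul, zero_smul, zero_add, hterm]

end PowerSeries

section Series

variable {A : Type*} [NormedRing A] [NormedSpace ℝ A] [IsScalarTower ℝ A A] [SMulCommClass ℝ A A]
  {a b : ℕ → A} {z : ℝ}

lemma sum_antidiagonal_pow_smul_mul_pow_smul (n : ℕ) :
    ∑ ij ∈ antidiagonal n, (z ^ ij.1 • a ij.1) * (z ^ ij.2 • b ij.2) =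
      z ^ n • cauchyProduct a b n := by
  rw [cauchyProduct, smul_sum]
  refine sum_congr rfl fun ij hij => ?_
  rw [smul_mul_smul_comm, ← pow_add, mem_antidiagonal.1 hij]

lemma summable_norm_pow_smul_cauchyProduct (ha : Summable fun k => ‖z ^ k • a k‖)
    (hb : Summable fun k => ‖z ^ k • b k‖) :
    Summable fun n => ‖z ^ n • cauchyProduct a b n‖ := by
  simpa only [sum_antidiagonal_pow_smul_mul_pow_smul] using
    summable_norm_sum_mul_antidiagonal_of_summable_norm ha hb

lemma tsum_pow_smul_mul_tsum_pow_smul [CompleteSpace A] (ha : Summable fun k => ‖z ^ k • a k‖)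
    (hb : Summable fun k => ‖z ^ k • b k‖) :
    (∑' k, z ^ k • a k) * (∑' k, z ^ k • b k) = ∑' n, z ^ n • cauchyProduct a b n := by
  simp only [tsum_mul_tsum_eq_tsum_sum_antidiagonal_of_summable_norm ha hb,
    sum_antidiagonal_pow_smul_mul_pow_smul]

theorem cauchyProduct_eq_single_of_tsum_mul_eq_one [CompleteSpace A] {f u : ℕ → A} {ρ : ℝ}
    (hρ : 0 < ρ) (hf : Summable fun k => ‖ρ ^ k • f k‖) (hu : Summable fun k => ‖ρ ^ k • u k‖)
    (h : ∀ z ∈ Ioo 0 ρ, (∑' k, z ^ k • f k) * (∑' k, z ^ k • u k) = 1) :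
    cauchyProduct f u = Pi.single 0 1 := by
  have hsingle (z : ℝ) (k : ℕ) : z ^ k • (Pi.single 0 1 : ℕ → A) k = (Pi.single 0 1 : ℕ → A) k := by
    cases k <;> simp
  refine eq_of_tsum_pow_smul_eq hρ (summable_norm_pow_smul_cauchyProduct hf hu) ?_ fun z hz => ?_
  · simp only [hsingle]
    exact summable_of_ne_finset_zero (s := {0}) fun k hk => by simp_all
  · have hz' : |z| ≤ ρ := (abs_of_pos hz.1).trans_le hz.2.le
    have hfz := summable_norm_pow_smul_of_abs_le hf hz'
    have huz := summable_norm_pow_smul_of_abs_le hu hz'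
    rw [← tsum_pow_smul_mul_tsum_pow_smul hfz huz, h z hz,
      tsum_eq_single 0 fun k hk => by simp [hk]]
    simp

theorem nsmul_succ_eq_neg_cauchyProduct_of_hasDerivAt [CompleteSpace A] {u c : ℕ → A} {ρ : ℝ}
    (hρ : 0 < ρ) (hu : Summable fun k => ‖ρ ^ k • u k‖) (hc : Summable fun k => ‖ρ ^ k • c k‖)
    (h : ∀ z ∈ Ioo 0 ρ, HasDerivAt (fun w => ∑' k, w ^ k • u k)
      (-((∑' k, z ^ k • u k) * ∑' k, z ^ k • c k)) z) :
    ∀ n, (n + 1) • u (n + 1) = -cauchyProduct u c n := by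
  have hρ2 : |ρ / 2| < ρ := by rw [abs_of_pos (half_pos hρ)]; linarith
  have hu2 := summable_norm_pow_smul_of_abs_le hu hρ2.le
  have hc2 := summable_norm_pow_smul_of_abs_le hc hρ2.le
  refine congrFun <| eq_of_tsum_pow_smul_eq (half_pos hρ) (summable_norm_pow_smul_nsmul_succ hu hρ2)
    ?_ fun z hz => ?_
  · simpa only [smul_neg, norm_neg] using summable_norm_pow_smul_cauchyProduct hu2 hc2
  · show ∑' k, z ^ k • ((k + 1) • u (k + 1)) = ∑' k, z ^ k • -cauchyProduct u c k
    have hz' : |z| < ρ := by rw [abs_of_pos hz.1]; linarith [hz.2]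
    have huz := summable_norm_pow_smul_of_abs_le hu hz'.le
    have hcz := summable_norm_pow_smul_of_abs_le hc hz'.le
    rw [(hasDerivAt_tsum_pow_smul hu hz').unique (h z ⟨hz.1, by linarith [hz.2]⟩),
      tsum_pow_smul_mul_tsum_pow_smul huz hcz, ← tsum_neg]
    simp only [smul_neg]

end Series

lemma inv_zpow_neg_natCast_sub_one {α : Type*} [DivisionRing α] (y : α) (k : ℕ) :
    y⁻¹ ^ (-(k : ℤ) - 1) = y ^ (k + 1) := by
  rw [← neg_add', ← Nat.cast_one, ← Nat.cast_add, inv_zpow', neg_neg, zpow_natCast]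

lemma inv_zpow_neg_natCast_sub_two {α : Type*} [DivisionRing α] (y : α) (k : ℕ) :
    y⁻¹ ^ (-(k : ℤ) - 2) = y ^ (k + 2) := by
  rw [← neg_add', ← Nat.cast_ofNat, ← Nat.cast_add, inv_zpow', neg_neg, zpow_natCast]

lemma coe_symm_mul_coe {R M : Type*} [Semiring R] [TopologicalSpace M] [AddCommMonoid M]
    [Module R M] (e : M ≃L[R] M) : (e.symm : M →L[R] M) * e = 1 :=
  e.toUnit.inv_mul

lemma coe_mul_coe_symm {R M : Type*} [Semiring R] [TopologicalSpace M] [AddCommMonoid M]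
    [Module R M] (e : M ≃L[R] M) : (e : M →L[R] M) * e.symm = 1 :=
  e.toUnit.mul_inv

def seqCons {α : Type*} (a : α) (c : ℕ → α) : ℕ → α
  | 0 => a
  | n + 1 => c n

section Laurent

variable {E : Type*} [NormedAddCommGroup E] [NormedSpace ℝ E] {c : ℕ → E} {z : ℝ}

lemma summable_norm_pow_smul_seqCons (hz : 0 < z)
    (hc : Summable fun k => ‖c k‖ * z⁻¹ ^ (-(k : ℤ) - 1)) (a : E) :
    Summable fun k => ‖z ^ k • seqCons a c k‖ := by
  refine (summable_nat_add_iff 1).mp <| hc.congr fun k => ?_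
  rw [inv_zpow_neg_natCast_sub_one, norm_smul, Real.norm_of_nonneg (by positivity), mul_comm]
  rfl

lemma add_tsum_inv_zpow_sub_two_smul_tsum_seqCons [CompleteSpace E] (hz : 0 < z)
    (hc : Summable fun k => ‖c k‖ * z⁻¹ ^ (-(k : ℤ) - 1)) (a : E) :
    a + ∑' k : ℕ, (z⁻¹ ^ (-(k : ℤ) - 1) : ℝ) • c k = ∑' k, z ^ k • seqCons a c k := by
  rw [tsum_eq_zero_add' ((summable_nat_add_iff 1).mpr
    (summable_norm_pow_smul_seqCons hz hc a).of_norm)]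
  simp only [seqCons, pow_zero, one_smul, inv_zpow_neg_natCast_sub_one]

lemma summable_norm_pow_smul_of_inv_zpow (hz : 0 < z)
    (hc : Summable fun k => ‖c k‖ * z⁻¹ ^ (-(k : ℤ) - 2)) :
    Summable fun k => ‖z ^ k • c k‖ := by
  refine (hc.mul_left (z ^ 2)⁻¹).congr fun k => ?_
  rw [inv_zpow_neg_natCast_sub_two, norm_smul, Real.norm_of_nonneg (by positivity), pow_add]
  field_simp

lemma tsum_inv_zpow_sub_two_smul (z : ℝ) (c : ℕ → E) :
    ∑' k : ℕ, (z⁻¹ ^ (-(k : ℤ) - 2) : ℝ) • c k = z ^ 2 • ∑' k, z ^ k • c k := by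
  simp only [inv_zpow_neg_natCast_sub_two, pow_add, mul_comm _ (z ^ 2), mul_smul, tsum_const_smul'']

end Laurent

lemma hasDerivAt_inv_comp_of_hasDerivAt_mul {A : Type*} [NormedRing A] [NormedSpace ℝ A]
    [SMulCommClass ℝ A A] {φ : ℝ → A} {β : A} {z : ℝ} (hz : z ≠ 0)
    (h : HasDerivAt φ (φ z⁻¹ * z ^ 2 • β) z⁻¹) : HasDerivAt (fun w => φ w⁻¹) (-(φ z⁻¹ * β)) z := by
  refine (h.scomp z (hasDerivAt_inv hz)).congr_deriv ?_
  rw [mul_smul_comm, smul_smul, neg_mul, inv_mul_cancel₀ (pow_ne_zero 2 hz), neg_smul, one_smul]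

theorem hasDerivAt_tsum_pow_smul_of_hasDerivAt_mul {A : Type*} [NormedRing A] [NormedSpace ℝ A]
    [SMulCommClass ℝ A A] {φ : ℝ → A} {u B : ℕ → A} {r z : ℝ} (hz : z ∈ Ioo 0 r)
    (hφ : ∀ w ∈ Ioo 0 r, φ w⁻¹ = ∑' k, w ^ k • u k)
    (hderiv : HasDerivAt φ (φ z⁻¹ * ∑' m : ℕ, (z⁻¹ ^ (-(m : ℤ) - 2) : ℝ) • B m) z⁻¹) :
    HasDerivAt (fun w => ∑' k, w ^ k • u k) (-((∑' k, z ^ k • u k) * ∑' k, z ^ k • B k)) z := by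
  rw [tsum_inv_zpow_sub_two_smul z B] at hderiv
  have h := hasDerivAt_inv_comp_of_hasDerivAt_mul hz.1.ne' hderiv
  rw [hφ z hz] at h
  exact h.congr_of_eventuallyEq <|
    eventually_of_mem (isOpen_Ioo.mem_nhds hz) fun w hw => (hφ w hw).symm

end ExpansionKernel

open ExpansionKernel in
/-- `B m`, `gs k` and `fs k` are the paper's `B_{m+2}`, `g_{k+1}` and `f_{k+1}`. -/
theorem expansion_coefficients_in_kernel
    {V : Type*} [NormedAddCommGroup V] [NormedSpace ℂ V] [FiniteDimensional ℂ V]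
    (a : ℝ) (ha : 0 < a) (B : ℕ → (V →L[ℂ] V))
    (hB : ∀ y : ℝ, a < y → Summable fun m : ℕ => ‖B m‖ * y ^ (-(m : ℤ) - 2))
    (g : ℝ → (V ≃L[ℂ] V))
    (hg : ∀ y : ℝ, a < y → HasDerivAt (fun t => (g t : V →L[ℂ] V))
      ((g y : V →L[ℂ] V) * ∑' m : ℕ, (y ^ (-(m : ℤ) - 2) : ℝ) • B m) y)
    (G : V ≃L[ℂ] V) (gs fs : ℕ → (V →L[ℂ] V)) (b : ℝ) (hab : a ≤ b)
    (hexp : ∀ y : ℝ, b < y →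
      (Summable fun k : ℕ => ‖gs k‖ * y ^ (-(k : ℤ) - 1)) ∧
      (Summable fun k : ℕ => ‖fs k‖ * y ^ (-(k : ℤ) - 1)) ∧
      (g y : V →L[ℂ] V)
        = (G : V →L[ℂ] V) * (1 + ∑' k : ℕ, (y ^ (-(k : ℤ) - 1) : ℝ) • gs k) ∧
      ((g y).symm : V →L[ℂ] V)
        = (1 + ∑' k : ℕ, (y ^ (-(k : ℤ) - 1) : ℝ) • fs k) * (G.symm : V →L[ℂ] V))
    (N₀ : V →L[ℂ] V)
    (hN : ∀ m : ℕ, ((LieAlgebra.ad ℂ (V →L[ℂ] V) N₀) ^ (m + 2)) (B m) = 0) :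
    ∀ k : ℕ, ((LieAlgebra.ad ℂ (V →L[ℂ] V) N₀) ^ (k + 2)) (gs k) = 0 ∧
      ((LieAlgebra.ad ℂ (V →L[ℂ] V) N₀) ^ (k + 2)) (fs k) = 0 := by
  have hb : 0 < b := ha.trans_le hab
  have hy : ∀ z ∈ Ioo 0 b⁻¹, b < z⁻¹ := fun z hz => (lt_inv_comm₀ hz.1 hb).mp hz.2
  set gcoeff := seqCons (1 : V →L[ℂ] V) gs
  set fcoeff := seqCons (1 : V →L[ℂ] V) fs
  have hseries : ∀ z ∈ Ioo 0 b⁻¹,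
      (Summable fun k => ‖z ^ k • gcoeff k‖) ∧ (Summable fun k => ‖z ^ k • fcoeff k‖) ∧
      (Summable fun k => ‖z ^ k • B k‖) ∧
      (G.symm : V →L[ℂ] V) * g z⁻¹ = ∑' k, z ^ k • gcoeff k ∧
      ((g z⁻¹).symm : V →L[ℂ] V) * G = ∑' k, z ^ k • fcoeff k := by
    intro z hz
    obtain ⟨hgs, hfs, hg_eq, hginv_eq⟩ := hexp z⁻¹ (hy z hz)
    have hgs' := summable_norm_pow_smul_seqCons hz.1 hgs (1 : V →L[ℂ] V)
    have hfs' := summable_norm_pow_smul_seqCons hz.1 hfs (1 : V →L[ℂ] V)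
    have hBs := summable_norm_pow_smul_of_inv_zpow hz.1 (hB z⁻¹ (hab.trans_lt (hy z hz)))
    refine ⟨hgs', hfs', hBs, ?_, ?_⟩
    · rw [hg_eq, ← mul_assoc, coe_symm_mul_coe G, one_mul,
        add_tsum_inv_zpow_sub_two_smul_tsum_seqCons hz.1 hgs]
    · rw [hginv_eq, mul_assoc, coe_symm_mul_coe G, mul_one,
        add_tsum_inv_zpow_sub_two_smul_tsum_seqCons hz.1 hfs]
  obtain ⟨ρ, hρ, hρb⟩ := exists_between (inv_pos.2 hb)
  have hsub : Ioo 0 ρ ⊆ Ioo 0 b⁻¹ := Ioo_subset_Ioo_right hρb.le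
  obtain ⟨hgρ, hfρ, hBρ, -, -⟩ := hseries ρ ⟨hρ, hρb⟩
  have hode : ∀ z ∈ Ioo 0 ρ, HasDerivAt (fun w => ∑' k, w ^ k • gcoeff k)
      (-((∑' k, z ^ k • gcoeff k) * ∑' k, z ^ k • B k)) z := fun z hz =>
    hasDerivAt_tsum_pow_smul_of_hasDerivAt_mul (φ := fun t => (G.symm : V →L[ℂ] V) * g t)
      (hsub hz) (fun w hw => (hseries w hw).2.2.2.1)
      (by rw [mul_assoc]; exact (hg z⁻¹ (hab.trans_lt (hy z (hsub hz)))).const_mul _)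
  have hinv : ∀ z ∈ Ioo 0 ρ, (∑' k, z ^ k • fcoeff k) * (∑' k, z ^ k • gcoeff k) = 1 := by
    intro z hz
    rw [← (hseries z (hsub hz)).2.2.2.1, ← (hseries z (hsub hz)).2.2.2.2, mul_assoc,
      ← mul_assoc (G : V →L[ℂ] V), coe_mul_coe_symm G, one_mul, coe_symm_mul_coe]
  have hgcoeff := ad_pow_succ_eq_zero_of_nsmul_eq_neg_cauchyProduct rfl hN <|
    nsmul_succ_eq_neg_cauchyProduct_of_hasDerivAt hρ hgρ hBρ hode
  have hfcoeff := ad_pow_succ_eq_zero_of_cauchyProduct_eq_single rfl hgcoeff <|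
    cauchyProduct_eq_single_of_tsum_mul_eq_one hρ hfρ hgρ hinv
  exact fun k => ⟨hgcoeff (k + 1), hfcoeff (k + 1)⟩
end
end

section
/- Let V be a finite-dimensional complex normed vector space, N_0 ∈ End(V) nilpotent, and (g_k)_{k≥1} a sequence in End(V) with Σ_{k≥1} ‖g_k‖ < ∞ and (ad N_0)^{k+1} g_k = 0 for every k ≥ 1. Then lim_{y→∞} e^{−iyN_0}·(1 + Σ_{k≥1} g_k y^{−k})·e^{iyN_0} = 1 + Σ_{k≥1} ((−i)^k / k!)·(ad N_0)^k g_k, where the series on the right converges absolutely. -/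
/-!
On `End(V)`, conjugation by `e^{cN₀}` is the exponential of `c • ad N₀`, since
`ad N₀ = L_{N₀} - R_{N₀}` is a difference of commuting multiplication operators. As
`(ad N₀)^{k+2} g_k = 0`, the conjugate of `y^{-k-1} g_k` is `y^{-k-1}` times a polynomial in `y`
of degree `k + 1`: as `y → ∞` only its leading coefficient `((-i)^{k+1}/(k+1)!) (ad N₀)^{k+1} g_k`
survives, and for `y ≥ 1` it is bounded by `e^{2‖N₀‖} ‖g_k‖`. Dominated convergence for series
finishes the proof.
-/

noncomputable section

attribute [local instance 100] LieRing.ofAssociativeRing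

open NormedSpace Filter Topology
open scoped Nat

section ExpApply

variable {𝕜 E : Type*} [RCLike 𝕜] [NormedAddCommGroup E] [NormedSpace 𝕜 E] [CompleteSpace E]

theorem ContinuousLinearMap.exp_apply (T : E →L[𝕜] E) (v : E) :
    exp T v = ∑' n, (n !⁻¹ : 𝕜) • (T ^ n) v := by
  rw [exp_eq_tsum 𝕜]
  exact (ContinuousLinearMap.apply 𝕜 E v).map_tsum (expSeries_summable' T)

end ExpApply

namespace ContinuousLinearMap

variable (𝕜 : Type*) {A : Type*} [RCLike 𝕜] [NormedRing A] [NormedAlgebra 𝕜 A]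

theorem pow_mul_eq_mul_pow (x : A) (n : ℕ) : mul 𝕜 A x ^ n = mul 𝕜 A (x ^ n) := by
  induction n with
  | zero => ext; simp
  | succ n ih => ext; rw [pow_succ, mul_apply_eq_comp, ih]; simp [pow_succ, mul_assoc]

theorem pow_flip_mul_eq_flip_mul_pow (x : A) (n : ℕ) :
    (mul 𝕜 A).flip x ^ n = (mul 𝕜 A).flip (x ^ n) := by
  induction n with
  | zero => ext; simp
  | succ n ih => ext; rw [pow_succ, mul_apply_eq_comp, ih]; simp [pow_succ', mul_assoc]

theorem commute_mul_flip_mul (x y : A) : Commute (mul 𝕜 A x) ((mul 𝕜 A).flip y) := by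
  ext; simp [mul_assoc]

/-- `LieAlgebra.ad 𝕜 A x` as a continuous linear map, so that it can be exponentiated. -/
def ad (x : A) : A →L[𝕜] A := mul 𝕜 A x - (mul 𝕜 A).flip x

theorem ad_pow_apply (x a : A) (n : ℕ) : (ad 𝕜 x ^ n) a = (LieAlgebra.ad 𝕜 A x ^ n) a := by
  induction n generalizing a with
  | zero => rfl
  | succ n ih =>
    rw [pow_succ', mul_apply_eq_comp, ih, pow_succ', Module.End.mul_apply]
    simp [ad, Ring.lie_def]

variable [CompleteSpace A]

theorem exp_mul_apply (x a : A) : exp (mul 𝕜 A x) a = exp x * a := by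
  rw [exp_apply, exp_eq_tsum 𝕜, ← (expSeries_summable' x).tsum_mul_right]
  simp [pow_mul_eq_mul_pow]

theorem exp_flip_mul_apply (x a : A) : exp ((mul 𝕜 A).flip x) a = a * exp x := by
  rw [exp_apply, exp_eq_tsum 𝕜, ← (expSeries_summable' x).tsum_mul_left]
  simp [pow_flip_mul_eq_flip_mul_pow]

variable {𝕜}

theorem exp_neg_smul_mul_mul_exp_smul (c : 𝕜) (x a : A) :
    exp (-c • x) * a * exp (c • x) = exp (-c • ad 𝕜 x) a := by
  let +nondep : NormedAlgebra ℚ (A →L[𝕜] A) := .restrictScalars ℚ 𝕜 _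
  have hsplit : -c • ad 𝕜 x = mul 𝕜 A (-c • x) + (mul 𝕜 A).flip (c • x) := by
    simp only [ad, map_neg, map_smul, smul_sub, neg_smul, sub_neg_eq_add]
  rw [hsplit, exp_add_of_commute (commute_mul_flip_mul 𝕜 _ _), mul_apply_eq_comp,
    exp_flip_mul_apply, exp_mul_apply, mul_assoc]

theorem exp_smul_ad_apply_of_ad_pow_eq_zero {x a : A} {m : ℕ}
    (ha : (LieAlgebra.ad 𝕜 A x ^ m) a = 0) (c : 𝕜) :
    exp (c • ad 𝕜 x) a = ∑ n ∈ Finset.range m, (c ^ n / n !) • (LieAlgebra.ad 𝕜 A x ^ n) a := by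
  rw [exp_apply, tsum_eq_sum fun n hn => ?_]
  · refine Finset.sum_congr rfl fun n _ => ?_
    rw [smul_pow, smul_apply, ad_pow_apply, smul_smul, div_eq_inv_mul]
  · rw [smul_pow, smul_apply, ad_pow_apply,
      Module.End.pow_map_zero_of_le (not_lt.mp (Finset.mem_range.not.mp hn)) ha, smul_zero,
      smul_zero]

theorem exp_smul_ad_apply_one (c : 𝕜) (x : A) : exp (c • ad 𝕜 x) 1 = 1 := by
  have hx : (LieAlgebra.ad 𝕜 A x ^ 1) 1 = 0 := by simp [Ring.lie_def]
  simp [exp_smul_ad_apply_of_ad_pow_eq_zero hx]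

end ContinuousLinearMap

section Conjugation

open ContinuousLinearMap

variable {𝕜 A : Type*} [RCLike 𝕜] [NormedRing A] [NormedAlgebra 𝕜 A] [CompleteSpace A]

theorem exp_neg_smul_mul_mul_exp_smul_of_ad_pow_eq_zero {x a : A} {m : ℕ}
    (ha : (LieAlgebra.ad 𝕜 A x ^ m) a = 0) (c : 𝕜) :
    exp (-c • x) * a * exp (c • x) =
      ∑ n ∈ Finset.range m, ((-c) ^ n / n !) • (LieAlgebra.ad 𝕜 A x ^ n) a := by
  rw [exp_neg_smul_mul_mul_exp_smul, exp_smul_ad_apply_of_ad_pow_eq_zero ha]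

theorem exp_neg_smul_mul_one_add_tsum_mul_exp_smul {ι : Type*} {f : ι → A} (hf : Summable f)
    (c : 𝕜) (x : A) :
    exp (-c • x) * (1 + ∑' i, f i) * exp (c • x) = 1 + ∑' i, exp (-c • x) * f i * exp (c • x) := by
  simp only [exp_neg_smul_mul_mul_exp_smul, map_add, (exp (-c • ad 𝕜 x)).map_tsum hf,
    exp_smul_ad_apply_one]

end Conjugation

section AdNorm

variable {𝕜 A : Type*} [RCLike 𝕜] [NormedRing A] [NormedAlgebra 𝕜 A]

theorem norm_ad_pow_apply_le (x a : A) (n : ℕ) :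
    ‖(LieAlgebra.ad 𝕜 A x ^ n) a‖ ≤ (2 * ‖x‖) ^ n * ‖a‖ := by
  induction n with
  | zero => simp
  | succ n ih =>
    set b := (LieAlgebra.ad 𝕜 A x ^ n) a
    calc ‖(LieAlgebra.ad 𝕜 A x ^ (n + 1)) a‖ = ‖x * b - b * x‖ := by
          rw [pow_succ', Module.End.mul_apply, LieAlgebra.ad_apply, Ring.lie_def]
      _ ≤ 2 * ‖x‖ * ‖b‖ := by
          linarith [norm_sub_le (x * b) (b * x), norm_mul_le x b, norm_mul_le b x,
            mul_comm ‖b‖ ‖x‖]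
      _ ≤ 2 * ‖x‖ * ((2 * ‖x‖) ^ n * ‖a‖) := by gcongr
      _ = (2 * ‖x‖) ^ (n + 1) * ‖a‖ := by ring

theorem sum_norm_div_factorial_smul_ad_pow_le (c : 𝕜) (x a : A) (m : ℕ) :
    ∑ n ∈ Finset.range m, ‖(c ^ n / n !) • (LieAlgebra.ad 𝕜 A x ^ n) a‖ ≤
      Real.exp (‖c‖ * (2 * ‖x‖)) * ‖a‖ :=
  calc ∑ n ∈ Finset.range m, ‖(c ^ n / n !) • (LieAlgebra.ad 𝕜 A x ^ n) a‖
      ≤ ∑ n ∈ Finset.range m, (‖c‖ * (2 * ‖x‖)) ^ n / n ! * ‖a‖ := by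
        gcongr with n
        rw [norm_smul, norm_div, norm_pow, RCLike.norm_natCast, mul_pow, div_mul_eq_mul_div,
          div_mul_eq_mul_div, mul_assoc]
        gcongr
        exact norm_ad_pow_apply_le x a n
    _ ≤ Real.exp (‖c‖ * (2 * ‖x‖)) * ‖a‖ := by
        rw [← Finset.sum_mul]
        gcongr
        exact Real.sum_le_exp_of_nonneg (by positivity) m

end AdNorm

section PolynomialGrowth

variable {E : Type*} [NormedAddCommGroup E] [NormedSpace ℝ E]

theorem zpow_smul_sum_range_pow_smul {y : ℝ} (hy : y ≠ 0) (w : ℕ → E) (k : ℕ) :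
    y ^ (-(k : ℤ) - 1) • ∑ n ∈ Finset.range (k + 2), y ^ n • w n =
      ∑ n ∈ Finset.range (k + 2), y ^ ((n : ℤ) - k - 1) • w n := by
  rw [Finset.smul_sum]
  refine Finset.sum_congr rfl fun n _ => ?_
  rw [smul_smul, ← zpow_natCast, ← zpow_add₀ hy]
  ring_nf

theorem tendsto_zpow_smul_sum_range_pow_smul (w : ℕ → E) (k : ℕ) :
    Tendsto (fun y : ℝ => y ^ (-(k : ℤ) - 1) • ∑ n ∈ Finset.range (k + 2), y ^ n • w n)
      atTop (𝓝 (w (k + 1))) := by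
  have hlower : Tendsto (fun y : ℝ => ∑ n ∈ Finset.range (k + 1), y ^ ((n : ℤ) - k - 1) • w n)
      atTop (𝓝 0) := by
    rw [← Finset.sum_const_zero (s := Finset.range (k + 1))]
    refine tendsto_finsetSum _ fun n hn => ?_
    have hneg : (n : ℤ) - k - 1 < 0 := by have := Finset.mem_range.mp hn; omega
    simpa using (tendsto_zpow_atTop_zero (𝕜 := ℝ) hneg).smul_const (w n)
  have hlim := hlower.add_const (w (k + 1))
  rw [zero_add] at hlim
  refine hlim.congr' ?_
  filter_upwards [eventually_gt_atTop 0] with y hy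
  rw [zpow_smul_sum_range_pow_smul hy.ne', Finset.sum_range_succ _ (k + 1)]
  simp

theorem norm_zpow_smul_sum_range_pow_smul_le (w : ℕ → E) (k : ℕ) {y : ℝ} (hy : 1 ≤ y) :
    ‖y ^ (-(k : ℤ) - 1) • ∑ n ∈ Finset.range (k + 2), y ^ n • w n‖ ≤
      ∑ n ∈ Finset.range (k + 2), ‖w n‖ := by
  rw [zpow_smul_sum_range_pow_smul (by positivity) w k]
  refine (norm_sum_le _ _).trans (Finset.sum_le_sum fun n hn => ?_)
  have hle : (n : ℤ) - k - 1 ≤ 0 := by have := Finset.mem_range.mp hn; omega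
  rw [norm_smul, Real.norm_of_nonneg (by positivity)]
  exact mul_le_of_le_one_left (norm_nonneg _) (zpow_le_one_of_nonpos₀ hy hle)

end PolynomialGrowth

section RealParameter

variable {A : Type*} [NormedRing A] [NormedAlgebra ℂ A] [CompleteSpace A]

theorem exp_neg_ofReal_smul_mul_mul_exp_ofReal_smul_eq_sum {x a : A} {m : ℕ}
    (ha : (LieAlgebra.ad ℂ A x ^ m) a = 0) (c : ℂ) (y : ℝ) :
    exp (-(c * y) • x) * a * exp ((c * y) • x) =
      ∑ n ∈ Finset.range m, y ^ n • (((-c) ^ n / n !) • (LieAlgebra.ad ℂ A x ^ n) a) := by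
  rw [exp_neg_smul_mul_mul_exp_smul_of_ad_pow_eq_zero ha]
  refine Finset.sum_congr rfl fun n _ => ?_
  rw [← Complex.coe_smul, smul_smul]
  push_cast
  ring_nf

theorem tendsto_zpow_smul_exp_neg_ofReal_smul_mul_mul_exp_ofReal_smul {x a : A} {k : ℕ}
    (ha : (LieAlgebra.ad ℂ A x ^ (k + 2)) a = 0) (c : ℂ) :
    Tendsto (fun y : ℝ => y ^ (-(k : ℤ) - 1) • (exp (-(c * y) • x) * a * exp ((c * y) • x)))
      atTop (𝓝 (((-c) ^ (k + 1) / (k + 1)!) • (LieAlgebra.ad ℂ A x ^ (k + 1)) a)) := by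
  simp_rw [exp_neg_ofReal_smul_mul_mul_exp_ofReal_smul_eq_sum ha]
  exact tendsto_zpow_smul_sum_range_pow_smul _ k

theorem norm_zpow_smul_exp_neg_ofReal_smul_mul_mul_exp_ofReal_smul_le {x a : A} {k : ℕ}
    (ha : (LieAlgebra.ad ℂ A x ^ (k + 2)) a = 0) (c : ℂ) {y : ℝ} (hy : 1 ≤ y) :
    ‖y ^ (-(k : ℤ) - 1) • (exp (-(c * y) • x) * a * exp ((c * y) • x))‖ ≤
      Real.exp (‖-c‖ * (2 * ‖x‖)) * ‖a‖ := by
  rw [exp_neg_ofReal_smul_mul_mul_exp_ofReal_smul_eq_sum ha]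
  exact (norm_zpow_smul_sum_range_pow_smul_le _ k hy).trans
    (sum_norm_div_factorial_smul_ad_pow_le (-c) x a _)

end RealParameter

theorem conjugated_expansion_limit_general
    {V : Type*} [NormedAddCommGroup V] [NormedSpace ℂ V] [FiniteDimensional ℂ V]
    (N₀ : V →L[ℂ] V)
    (gs : ℕ → (V →L[ℂ] V))
    (hsum : Summable fun k : ℕ => ‖gs k‖)
    (hker : ∀ k : ℕ, ((LieAlgebra.ad ℂ (V →L[ℂ] V) N₀) ^ (k + 2)) (gs k) = 0) :
    (Summable fun k : ℕ =>
      ‖(((-Complex.I) ^ (k + 1)) / ((k + 1).factorial : ℂ)) •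
        ((LieAlgebra.ad ℂ (V →L[ℂ] V) N₀) ^ (k + 1)) (gs k)‖) ∧
    Filter.Tendsto
      (fun y : ℝ =>
        NormedSpace.exp (((-Complex.I) * (y : ℂ)) • N₀) *
          ((1 : V →L[ℂ] V) + ∑' k : ℕ, (y ^ (-(k : ℤ) - 1) : ℝ) • gs k) *
          NormedSpace.exp ((Complex.I * (y : ℂ)) • N₀))
      Filter.atTop
      (nhds ((1 : V →L[ℂ] V) + ∑' k : ℕ,
        (((-Complex.I) ^ (k + 1)) / ((k + 1).factorial : ℂ)) •
          ((LieAlgebra.ad ℂ (V →L[ℂ] V) N₀) ^ (k + 1)) (gs k))) := by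
  have : CompleteSpace V := FiniteDimensional.complete ℂ V
  set B := Real.exp (‖-Complex.I‖ * (2 * ‖N₀‖))
  have hlim k :=
    tendsto_zpow_smul_exp_neg_ofReal_smul_mul_mul_exp_ofReal_smul (hker k) Complex.I
  have hbound : ∀ᶠ y : ℝ in atTop, ∀ k : ℕ, ‖(y ^ (-(k : ℤ) - 1) : ℝ) •
      (exp (-(Complex.I * y) • N₀) * gs k * exp ((Complex.I * y) • N₀))‖ ≤ B * ‖gs k‖ :=
    (eventually_ge_atTop 1).mono fun y hy k =>
      norm_zpow_smul_exp_neg_ofReal_smul_mul_mul_exp_ofReal_smul_le (hker k) _ hy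
  refine ⟨(hsum.mul_left B).of_nonneg_of_le (fun _ => norm_nonneg _) fun k =>
    le_of_tendsto (hlim k).norm (hbound.mono fun y hy => hy k), ?_⟩
  refine (tendsto_const_nhds.add
    (tendsto_tsum_of_dominated_convergence (hsum.mul_left B) hlim hbound)).congr' ?_
  filter_upwards [eventually_ge_atTop 1] with y hy
  have hs : Summable fun k : ℕ => (y ^ (-(k : ℤ) - 1) : ℝ) • gs k :=
    hsum.of_norm_bounded fun k => by
      rw [norm_smul, Real.norm_of_nonneg (by positivity)]
      exact mul_le_of_le_one_left (norm_nonneg _) (zpow_le_one_of_nonpos₀ hy (by omega))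
  rw [neg_mul, exp_neg_smul_mul_one_add_tsum_mul_exp_smul hs]
  simp only [mul_smul_comm, smul_mul_assoc]

/-- **Limit of `e^{-iyN₀} (1 + Σ g_k y^{-k}) e^{iyN₀}` as `y → ∞`** (cf. (4.19)):
if `N₀` is nilpotent, `Σ ‖g_k‖ < ∞` and `(ad N₀)^{k+1} g_k = 0`, then the limit is
`1 + Σ_{k≥1} ((-i)^k / k!) (ad N₀)^k g_k`, with the right-hand series absolutely
convergent.  Here `gs k` denotes `g_{k+1}`. -/
theorem conjugated_expansion_limit
    {V : Type*} [NormedAddCommGroup V] [NormedSpace ℂ V] [FiniteDimensional ℂ V]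
    (N₀ : V →L[ℂ] V) (hN : IsNilpotent N₀)
    (gs : ℕ → (V →L[ℂ] V))
    (hsum : Summable fun k : ℕ => ‖gs k‖)
    (hker : ∀ k : ℕ, ((LieAlgebra.ad ℂ (V →L[ℂ] V) N₀) ^ (k + 2)) (gs k) = 0) :
    (Summable fun k : ℕ =>
      ‖(((-Complex.I) ^ (k + 1)) / ((k + 1).factorial : ℂ)) •
        ((LieAlgebra.ad ℂ (V →L[ℂ] V) N₀) ^ (k + 1)) (gs k)‖) ∧
    Filter.Tendsto
      (fun y : ℝ =>
        NormedSpace.exp (((-Complex.I) * (y : ℂ)) • N₀) *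
          ((1 : V →L[ℂ] V) + ∑' k : ℕ, (y ^ (-(k : ℤ) - 1) : ℝ) • gs k) *
          NormedSpace.exp ((Complex.I * (y : ℂ)) • N₀))
      Filter.atTop
      (nhds ((1 : V →L[ℂ] V) + ∑' k : ℕ,
        (((-Complex.I) ^ (k + 1)) / ((k + 1).factorial : ℂ)) •
          ((LieAlgebra.ad ℂ (V →L[ℂ] V) N₀) ^ (k + 1)) (gs k))) :=
  conjugated_expansion_limit_general N₀ gs hsum hker
end
end
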